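/- arXiv:math/0503515 — 5 statements merged into one kernel-verified Lean document; each statement's English description precedes it below -/
import Mathlib

section
/- Let c(z) = ∑_{n≥0} c_n z^n have nonnegative coefficients and radius of convergence at least R > 1. Then for 1 ≤ r < R, the derivative satisfies c'(r) ≤ (c(r)/r)·(log(c(R)/c(r)))/(log(R/r)), assuming c(R) < ∞. -/
theorem stmt2 (c : ℕ → ℝ) (R r : ℝ) (hc : ∀ n, 0 ≤ c n) (hR : 1 < R)
    (hsum : Summable fun n => c n * R ^ n) (hr : 1 ≤ r) (hrR : r < R) :
    ∑' n : ℕ, (n : ℝ) * c n * r ^ (n - 1) ≤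
      (∑' n, c n * r ^ n) / r *
        (Real.log ((∑' n, c n * R ^ n) / (∑' n, c n * r ^ n)) / Real.log (R / r)) := by
  have hr0 : (0:ℝ) < r := lt_of_lt_of_le one_pos hr
  have hR0 : (0:ℝ) < R := lt_trans hr0 hrR
  have hRr1 : 1 < R / r := (one_lt_div hr0).2 hrR
  have hs0 : 0 < Real.log (R / r) := Real.log_pos hRr1
  set s := Real.log (R / r) with hs
  have hcr : Summable fun n => c n * r ^ n := by
    refine hsum.of_nonneg_of_le (fun n => mul_nonneg (hc n) (pow_nonneg hr0.le n)) ?_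
    intro n
    exact mul_le_mul_of_nonneg_left (pow_le_pow_left₀ hr0.le hrR.le n) (hc n)
  have hgeo : Summable fun n : ℕ => (n:ℝ) * (r / R) ^ n := by
    have h1 : ‖r / R‖ < 1 := by
      rw [Real.norm_eq_abs, abs_of_pos (div_pos hr0 hR0)]
      exact (div_lt_one hR0).2 hrR
    simpa using summable_pow_mul_geometric_of_norm_lt_one 1 h1
  obtain ⟨D, hD⟩ := hgeo.tendsto_atTop_zero.bddAbove_range
  have hDn : ∀ n : ℕ, (n:ℝ) * (r / R) ^ n ≤ D := fun n => hD ⟨n, rfl⟩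
  have hM : Summable fun n : ℕ => (n:ℝ) * c n * r ^ n := by
    refine (hsum.mul_left D).of_nonneg_of_le
      (fun n => mul_nonneg (mul_nonneg (Nat.cast_nonneg n) (hc n)) (pow_nonneg hr0.le n)) ?_
    intro n
    have hEq : (n:ℝ) * c n * r ^ n = ((n:ℝ) * (r / R) ^ n) * (c n * R ^ n) := by
      rw [div_pow]
      field_simp
    rw [hEq]
    exact mul_le_mul_of_nonneg_right (hDn n) (mul_nonneg (hc n) (pow_nonneg hR0.le n))
  set A := ∑' n, c n * r ^ n with hA
  set B := ∑' n, c n * R ^ n with hB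
  set M := ∑' n : ℕ, (n:ℝ) * c n * r ^ n with hMdef
  have hLHS : (∑' n : ℕ, (n : ℝ) * c n * r ^ (n - 1)) = M / r := by
    rw [hMdef, ← tsum_div_const]
    refine tsum_congr fun n => ?_
    cases n with
    | zero => simp
    | succ k =>
      rw [Nat.succ_sub_one, pow_succ]
      field_simp
  rw [hLHS]
  by_cases hA0 : A = 0
  · have hzero : ∀ n, c n = 0 := by
      intro n
      have h1 : c n * r ^ n ≤ A :=
        Summable.le_tsum hcr n (fun m _ => mul_nonneg (hc m) (pow_nonneg hr0.le m))
      have h2 : 0 ≤ c n * r ^ n := mul_nonneg (hc n) (pow_nonneg hr0.le n)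
      have h3 : c n * r ^ n = 0 := le_antisymm (hA0 ▸ h1) h2
      nlinarith [pow_pos hr0 n]
    have hM0 : M = 0 := by
      rw [hMdef]
      simp [hzero]
    rw [hM0, hA0]
    simp
  have hApos : 0 < A :=
    lt_of_le_of_ne (tsum_nonneg fun n => mul_nonneg (hc n) (pow_nonneg hr0.le n)) (Ne.symm hA0)
  set m := M * s / A with hm
  have key : ∀ n : ℕ, c n * r ^ n * (Real.exp m * ((n:ℝ) * s - m + 1)) ≤ c n * R ^ n := by
    intro n
    have hRn : c n * R ^ n = c n * r ^ n * Real.exp ((n:ℝ) * s) := by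
      rw [Real.exp_nat_mul, hs, Real.exp_log (div_pos hR0 hr0), div_pow]
      field_simp
    rw [hRn]
    have h1 : ((n:ℝ) * s - m) + 1 ≤ Real.exp ((n:ℝ) * s - m) := Real.add_one_le_exp _
    have h2 : Real.exp m * ((n:ℝ) * s - m + 1) ≤ Real.exp ((n:ℝ) * s) := by
      calc Real.exp m * ((n:ℝ) * s - m + 1) ≤ Real.exp m * Real.exp ((n:ℝ) * s - m) :=
            mul_le_mul_of_nonneg_left h1 (Real.exp_pos m).le
        _ = Real.exp ((n:ℝ) * s) := by rw [← Real.exp_add]; ring_nf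
    exact mul_le_mul_of_nonneg_left h2 (mul_nonneg (hc n) (pow_nonneg hr0.le n))
  have hsummL : Summable fun n : ℕ => c n * r ^ n * (Real.exp m * ((n:ℝ) * s - m + 1)) := by
    have hEq : (fun n : ℕ => c n * r ^ n * (Real.exp m * ((n:ℝ) * s - m + 1)))
        = fun n : ℕ => (Real.exp m * s) * ((n:ℝ) * c n * r ^ n)
            + (Real.exp m * (1 - m)) * (c n * r ^ n) := by
      funext n; ring
    rw [hEq]
    exact (hM.mul_left _).add (hcr.mul_left _)
  have hsumineq : (∑' n : ℕ, c n * r ^ n * (Real.exp m * ((n:ℝ) * s - m + 1))) ≤ B :=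
    Summable.tsum_le_tsum key hsummL hsum
  have htsumval : (∑' n : ℕ, c n * r ^ n * (Real.exp m * ((n:ℝ) * s - m + 1)))
      = Real.exp m * A := by
    have hEq : (fun n : ℕ => c n * r ^ n * (Real.exp m * ((n:ℝ) * s - m + 1)))
        = fun n : ℕ => (Real.exp m * s) * ((n:ℝ) * c n * r ^ n)
            + (Real.exp m * (1 - m)) * (c n * r ^ n) := by
      funext n; ring
    rw [hEq, Summable.tsum_add (hM.mul_left _) (hcr.mul_left _), tsum_mul_left, tsum_mul_left,
      ← hMdef, ← hA]
    have hmA : m * A = M * s := by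
      rw [hm, div_mul_cancel₀ _ (ne_of_gt hApos)]
    linear_combination (-Real.exp m) * hmA
  rw [htsumval] at hsumineq
  have hBA : Real.exp m ≤ B / A := (le_div_iff₀ hApos).2 hsumineq
  have hBApos : 0 < B / A := lt_of_lt_of_le (Real.exp_pos m) hBA
  have hmL : m ≤ Real.log (B / A) := (Real.le_log_iff_exp_le hBApos).2 hBA
  have hMs : M * s ≤ A * Real.log (B / A) := by
    have : M * s / A ≤ Real.log (B / A) := hmL
    calc M * s = (M * s / A) * A := by field_simp
      _ ≤ Real.log (B / A) * A := mul_le_mul_of_nonneg_right this hApos.le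
      _ = A * Real.log (B / A) := by ring
  rw [div_mul_div_comm, div_le_div_iff₀ hr0 (by positivity)]
  nlinarith [hMs, hr0, hs0]
end

section
/- Let b_n ≥ 0 with ∑ b_n = 1, b_1 ≥ β > 0 and ∑ b_n R^n ≤ L for some R > 1. Then for every real r with 1 < r < R and 1 + 2βr > r^{(log L)/(log R)}, one has b(−r) < 1, where b(z) = ∑ b_n z^n. Consequently, the equation b(z)=1 has no solution on the interval (−r, −1]. -/
/-! Write `c = log L / log R` and `b(z) = ∑ bₙ zⁿ`. For `s = R ^ t` with `0 ≤ t ≤ 1`, Hölder's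
inequality with weights `bₙ` and exponent `1/t` gives `b(s) ≤ b(R) ^ t ≤ L ^ t = s ^ c`. Every
term of `b(s) - b(-s)` is nonnegative and the `n = 1` term is `2 b₁ s`, so
`b(-s) ≤ s ^ c - 2 b₁ s`, which is `< 1` once `s ^ c < 1 + 2 β s`. Finally `L ≥ b(R) ≥ R` forces
`c ≥ 1`, so `s ↦ s ^ c - 2 β s` is convex; being `< 1` at `s = 1` and at `s = r`, it is `< 1` on
all of `[1, r]`. -/

open Real Finset Set

theorem rpow_logb_comm {a x y : ℝ} (hx : 0 < x) (hy : 0 < y) :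
    x ^ logb a y = y ^ logb a x := by
  rw [rpow_def_of_pos hx, rpow_def_of_pos hy, logb, logb]
  ring_nf

section
variable {b : ℕ → ℝ}

theorem tsum_mul_rpow_pow_le_rpow_tsum (hb : ∀ n, 0 ≤ b n) (hsum : HasSum b 1) {R t : ℝ}
    (hR : 0 ≤ R) (ht0 : 0 ≤ t) (ht1 : t ≤ 1) (hbR : Summable fun n => b n * R ^ n) :
    ∑' n, b n * (R ^ t) ^ n ≤ (∑' n, b n * R ^ n) ^ t := by
  rcases ht0.eq_or_lt with rfl | ht0
  · simp [hsum.tsum_eq]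
  have hp : 1 ≤ t⁻¹ := (one_le_inv₀ ht0).2 ht1
  have hRt : 0 ≤ R ^ t := rpow_nonneg hR t
  refine Real.tsum_le_of_sum_le (fun n => mul_nonneg (hb n) (pow_nonneg hRt n)) fun F => ?_
  have hpow : ∀ n : ℕ, ((R ^ t) ^ n) ^ t⁻¹ = R ^ n := fun n => by
    rw [← rpow_natCast, ← rpow_natCast, ← rpow_mul hRt, ← rpow_mul hR, mul_comm t,
      mul_assoc, inv_mul_cancel₀ ht0.ne', mul_one]
  calc ∑ n ∈ F, b n * (R ^ t) ^ n
      ≤ (∑ n ∈ F, b n) ^ (1 - t⁻¹⁻¹) * (∑ n ∈ F, b n * ((R ^ t) ^ n) ^ t⁻¹) ^ t⁻¹⁻¹ :=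
        inner_le_weight_mul_Lp_of_nonneg F hp _ _ hb fun n => pow_nonneg hRt n
    _ ≤ 1 * (∑' n, b n * R ^ n) ^ t := by
        have hbR0 : ∀ n, 0 ≤ b n * R ^ n := fun n => mul_nonneg (hb n) (pow_nonneg hR n)
        simp only [hpow, inv_inv]
        refine mul_le_mul ?_ ?_ (rpow_nonneg (sum_nonneg fun n _ => hbR0 n) t) zero_le_one
        · exact rpow_le_one (sum_nonneg fun n _ => hb n) (sum_le_hasSum F (fun n _ => hb n) hsum)
            (by linarith)
        · exact rpow_le_rpow (sum_nonneg fun n _ => hbR0 n)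
            (hbR.sum_le_tsum F fun n _ => hbR0 n) ht0.le
    _ = _ := one_mul _

theorem tsum_mul_neg_pow_le (hb : ∀ n, 0 ≤ b n) {s : ℝ} (hs : 0 ≤ s)
    (hbs : Summable fun n => b n * s ^ n) :
    ∑' n, b n * (-s) ^ n ≤ ∑' n, b n * s ^ n - 2 * b 1 * s := by
  have hbs' : Summable fun n => b n * (-s) ^ n := by
    refine hbs.of_norm_bounded fun n => ?_
    rw [norm_mul, norm_pow, norm_neg, norm_of_nonneg (hb n), norm_of_nonneg hs]
  have hterm : ∀ n, b n * (-s) ^ n ≤ b n * s ^ n := fun n =>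
    mul_le_mul_of_nonneg_left ((le_abs_self _).trans (by simp [abs_of_nonneg hs])) (hb n)
  have hfirst : 2 * b 1 * s ≤ ∑' n, (b n * s ^ n - b n * (-s) ^ n) := by
    calc 2 * b 1 * s = b 1 * s ^ 1 - b 1 * (-s) ^ 1 := by ring
      _ ≤ _ := (hbs.sub hbs').le_tsum 1 fun n _ => sub_nonneg.2 (hterm n)
  rw [hbs.tsum_sub hbs'] at hfirst
  linarith

theorem le_tsum_mul_pow (hb : ∀ n, 0 ≤ b n) (hb0 : b 0 = 0) (hsum : HasSum b 1) {R : ℝ}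
    (hR : 1 ≤ R) (hbR : Summable fun n => b n * R ^ n) : R ≤ ∑' n, b n * R ^ n := by
  have hterm : ∀ n, b n * R ≤ b n * R ^ n := fun n => by
    rcases n.eq_zero_or_pos with rfl | hn
    · simp [hb0]
    · exact mul_le_mul_of_nonneg_left (le_self_pow₀ hR hn.ne') (hb n)
  calc R = ∑' n, b n * R := by rw [tsum_mul_right, hsum.tsum_eq, one_mul]
    _ ≤ _ := (hsum.summable.mul_right R).tsum_le_tsum hterm hbR

theorem tsum_mul_neg_pow_lt_one (hb : ∀ n, 0 ≤ b n) (hsum : HasSum b 1) {R L s : ℝ}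
    (hR : 1 < R) (hbR : Summable fun n => b n * R ^ n) (hL : ∑' n, b n * R ^ n ≤ L)
    (hL0 : 0 < L) (hs : 1 ≤ s) (hsR : s ≤ R) (hcond : s ^ logb R L < 1 + 2 * b 1 * s) :
    ∑' n, b n * (-s) ^ n < 1 := by
  have hs0 : 0 ≤ s := zero_le_one.trans hs
  have ht0 : 0 ≤ logb R s := logb_nonneg hR hs
  have ht1 : logb R s ≤ 1 := by
    simpa [logb_self_eq_one hR] using logb_le_logb_of_le hR (by linarith) hsR
  have hbs : Summable fun n => b n * s ^ n :=
    hbR.of_nonneg_of_le (fun n => mul_nonneg (hb n) (pow_nonneg hs0 n))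
      fun n => mul_le_mul_of_nonneg_left (pow_le_pow_left₀ hs0 hsR n) (hb n)
  have hbound : ∑' n, b n * s ^ n ≤ L ^ logb R s :=
    calc ∑' n, b n * s ^ n = ∑' n, b n * (R ^ logb R s) ^ n := by
          rw [rpow_logb (by linarith) hR.ne' (by linarith)]
      _ ≤ (∑' n, b n * R ^ n) ^ logb R s :=
          tsum_mul_rpow_pow_le_rpow_tsum hb hsum (by linarith) ht0 ht1 hbR
      _ ≤ L ^ logb R s :=
          rpow_le_rpow (tsum_nonneg fun n => mul_nonneg (hb n) (pow_nonneg (by linarith) n)) hL ht0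
  calc ∑' n, b n * (-s) ^ n ≤ ∑' n, b n * s ^ n - 2 * b 1 * s := tsum_mul_neg_pow_le hb hs0 hbs
    _ ≤ s ^ logb R L - 2 * b 1 * s := by rw [← rpow_logb_comm hL0 (by linarith)]; linarith
    _ < 1 := by linarith

end

theorem rpow_lt_one_add_mul_of_mem_Icc {c a r s : ℝ} (hc : 1 ≤ c) (ha : 0 < a)
    (hr : r ^ c < 1 + a * r) (hs : s ∈ Icc 1 r) : s ^ c < 1 + a * s := by
  have hconv : ConvexOn ℝ (Ici 0) fun x : ℝ => x ^ c - a * x :=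
    (convexOn_rpow hc).sub ((concaveOn_id (convex_Ici 0)).smul ha.le)
  have := hconv.le_max_of_mem_Icc (mem_Ici.2 zero_le_one)
    (mem_Ici.2 (zero_le_one.trans (hs.1.trans hs.2))) hs
  simp only [one_rpow, mul_one, le_max_iff] at this
  rcases this with h | h <;> linarith

theorem stmt8 (b : ℕ → ℝ) (β R L : ℝ) (hb : ∀ n, 0 ≤ b n) (hb0 : b 0 = 0)
    (hsum : HasSum b 1) (hβ : 0 < β) (hb1 : β ≤ b 1) (hR : 1 < R)
    (hbR : Summable fun n => b n * R ^ n) (hL : ∑' n, b n * R ^ n ≤ L)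
    (r : ℝ) (hr1 : 1 < r) (hrR : r < R)
    (hcond : r ^ (Real.log L / Real.log R) < 1 + 2 * β * r) :
    (∑' n : ℕ, b n * (-r) ^ n < 1) ∧
      ∀ x ∈ Set.Ioc (-r) (-1 : ℝ), ∑' n : ℕ, b n * x ^ n ≠ 1 := by
  have hRL : R ≤ L := (le_tsum_mul_pow hb hb0 hsum hR.le hbR).trans hL
  have hc : 1 ≤ logb R L := (le_logb_iff_rpow_le hR (by linarith)).2 (by simpa using hRL)
  have hneg_lt_one : ∀ s ∈ Icc 1 r, ∑' n, b n * (-s) ^ n < 1 := fun s hs => by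
    have hβs := rpow_lt_one_add_mul_of_mem_Icc hc (by positivity : 0 < 2 * β) hcond hs
    have hb1s := mul_le_mul_of_nonneg_right hb1 (zero_le_one.trans hs.1)
    exact tsum_mul_neg_pow_lt_one hb hsum hR hbR hL (by linarith) hs.1 (hs.2.trans hrR.le)
      (by linarith)
  refine ⟨hneg_lt_one r ⟨hr1.le, le_rfl⟩, fun x hx => ?_⟩
  simpa using (hneg_lt_one (-x) ⟨by linarith [hx.2], by linarith [hx.1]⟩).ne
end

section
/- Let P be a Markov transition kernel on (S, 𝓑), V : S → [1,∞), C ∈ 𝓑, λ < 1, K < ∞ with PV(x) ≤ λV(x) for x ∉ C and PV(x) ≤ K for x ∈ C. Let τ = inf{n ≥ 1 : X_n ∈ C}. Then P^x(τ < ∞) = 1 for all x, and for 1 ≤ r ≤ λ^{-1}: E^x(r^τ) ≤ V(x) if x ∉ C, and E^x(r^τ) ≤ rK if x ∈ C. -/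
/-!
Let `T f x = ∫ 1_{Cᶜ} f dP(x, ·)` be the taboo operator. Then `P^x(τ = n + 1) = Tⁿ (P(·, C)) x`
and `P^x(τ > n) = Tⁿ 1 x`, and since `P(·, C) = 1 - T 1` the partial sums of `P^x(τ = n)`
telescope to `1 - Tⁿ 1 x`. The drift condition gives `Tⁿ 1 ≤ λⁿ V` off `C`, hence
`Tⁿ⁺¹ 1 ≤ λⁿ PV → 0`, so `τ < ∞` almost surely.

For the moments, the truncated generating functions `G_N x = E^x(r^τ; τ ≤ N)` satisfy
`G_{N+1} = r (P(·, C) + T G_N)`, which is at most `r PV` as soon as `G_N ≤ V` off `C`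
(split `PV` over `C` and `Cᶜ`, using `V ≥ 1` on `C`). Off `C`, `r PV ≤ r λ V ≤ V` closes the
induction; on `C`, `r PV ≤ r K`.
-/

open MeasureTheory ProbabilityTheory

/-- `tauDist κ C n x = P^x(τ = n)` where `τ = inf {n ≥ 1 : X_n ∈ C}` for the Markov
chain with transition kernel `κ`. -/
noncomputable def tauDist {S : Type*} [MeasurableSpace S] (κ : Kernel S S) (C : Set S) :
    ℕ → S → ℝ
  | 0 => fun _ => 0
  | 1 => fun x => (κ x C).toReal
  | n + 2 => fun x => ∫ y, Set.indicator Cᶜ (tauDist κ C (n + 1)) y ∂(κ x)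

open Filter Finset

def unitFns (α : Type*) [MeasurableSpace α] : Set (α → ℝ) :=
  {f | Measurable f ∧ ∀ y, f y ∈ Set.Icc (0 : ℝ) 1}

lemma MeasureTheory.Integrable.of_mem_unitFns {α : Type*} [MeasurableSpace α] {μ : Measure α}
    [IsFiniteMeasure μ] {f : α → ℝ} (hf : f ∈ unitFns α) : Integrable f μ :=
  .of_bound hf.1.aestronglyMeasurable 1 <| ae_of_all _ fun y =>
    abs_le.2 ⟨by linarith [(hf.2 y).1], (hf.2 y).2⟩

namespace ProbabilityTheory.Kernel

variable {α β : Type*} [MeasurableSpace α] [MeasurableSpace β]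

/-- The taboo kernel `_C P` of Meyn and Tweedie (one step of `κ` that does not land in `C`),
acting on functions. -/
noncomputable def tabooOp (κ : Kernel α β) (C : Set β) (f : β → ℝ) (x : α) : ℝ :=
  ∫ y, Cᶜ.indicator f y ∂κ x

variable {κ : Kernel α β} {C : Set β} {f g V : β → ℝ} {x : α}

lemma tabooOp_eq_setIntegral (hC : MeasurableSet C) (f : β → ℝ) (x : α) :
    tabooOp κ C f x = ∫ y in Cᶜ, f y ∂κ x :=
  integral_indicator hC.compl

lemma tabooOp_zero (x : α) : tabooOp κ C 0 x = 0 := by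
  simp [tabooOp]

lemma measurable_tabooOp (hC : MeasurableSet C) (hf : Measurable f) :
    Measurable (tabooOp κ C f) :=
  (hf.indicator hC.compl).stronglyMeasurable.integral_kernel.measurable

lemma tabooOp_nonneg (hf : 0 ≤ f) (x : α) : 0 ≤ tabooOp κ C f x :=
  integral_nonneg <| Set.indicator_nonneg fun y _ => hf y

lemma tabooOp_sub (hC : MeasurableSet C) (hf : Integrable f (κ x)) (hg : Integrable g (κ x)) :
    tabooOp κ C (f - g) x = tabooOp κ C f x - tabooOp κ C g x := by
  simp only [tabooOp_eq_setIntegral hC, Pi.sub_apply]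
  exact integral_sub hf.integrableOn hg.integrableOn

lemma tabooOp_const_mul (hC : MeasurableSet C) (c : ℝ) (f : β → ℝ) (x : α) :
    tabooOp κ C (fun y => c * f y) x = c * tabooOp κ C f x := by
  simp only [tabooOp_eq_setIntegral hC]
  exact integral_const_mul c _

lemma tabooOp_finsetSum {ι : Type*} (hC : MeasurableSet C) (s : Finset ι) {f : ι → β → ℝ}
    (hf : ∀ i ∈ s, Integrable (f i) (κ x)) :
    tabooOp κ C (fun y => ∑ i ∈ s, f i y) x = ∑ i ∈ s, tabooOp κ C (f i) x := by
  simp only [tabooOp_eq_setIntegral hC]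
  exact integral_finsetSum s fun i hi => (hf i hi).integrableOn

lemma tabooOp_le_integral (hC : MeasurableSet C) (hf : Integrable f (κ x))
    (hg : Integrable g (κ x)) (hg0 : 0 ≤ g) (hfg : ∀ y ∉ C, f y ≤ g y) :
    tabooOp κ C f x ≤ ∫ y, g y ∂κ x :=
  calc tabooOp κ C f x = ∫ y in Cᶜ, f y ∂κ x := tabooOp_eq_setIntegral hC f x
    _ ≤ ∫ y in Cᶜ, g y ∂κ x := setIntegral_mono_on hf.integrableOn hg.integrableOn hC.compl hfg
    _ ≤ ∫ y, g y ∂κ x := setIntegral_le_integral hg (ae_of_all _ hg0)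

lemma measureReal_add_tabooOp_le_integral [IsFiniteKernel κ] (hC : MeasurableSet C)
    (hg : Integrable g (κ x)) (hV : Integrable V (κ x)) (hV1 : ∀ y ∈ C, 1 ≤ V y)
    (hgV : ∀ y ∉ C, g y ≤ V y) :
    (κ x).real C + tabooOp κ C g x ≤ ∫ y, V y ∂κ x := by
  rw [tabooOp_eq_setIntegral hC, ← integral_add_compl hC hV]
  refine add_le_add ?_ (setIntegral_mono_on hg.integrableOn hV.integrableOn hC.compl hgV)
  calc (κ x).real C = ∫ _ in C, (1 : ℝ) ∂κ x := by simp
    _ ≤ ∫ y in C, V y ∂κ x := setIntegral_mono_on integrableOn_const hV.integrableOn hC hV1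

lemma mapsTo_tabooOp {κ : Kernel α α} [IsMarkovKernel κ] {C : Set α} (hC : MeasurableSet C) :
    Set.MapsTo (tabooOp κ C) (unitFns α) (unitFns α) := by
  intro f hf
  refine ⟨measurable_tabooOp hC hf.1, fun x => ⟨tabooOp_nonneg (fun y => (hf.2 y).1) x, ?_⟩⟩
  calc tabooOp κ C f x ≤ ∫ _, (1 : ℝ) ∂κ x :=
        tabooOp_le_integral hC (.of_mem_unitFns hf) (integrable_const 1) zero_le_one
          fun y _ => (hf.2 y).2
    _ = 1 := by simp

end ProbabilityTheory.Kernel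

open ProbabilityTheory.Kernel

section ReturnTime

variable {S : Type*} [MeasurableSpace S] {κ : Kernel S S} {C : Set S}

/-- `survProb κ C n x = P^x(τ > n)`. -/
noncomputable def survProb (κ : Kernel S S) (C : Set S) (n : ℕ) : S → ℝ :=
  (tabooOp κ C)^[n] 1

lemma survProb_succ (n : ℕ) : survProb κ C (n + 1) = tabooOp κ C (survProb κ C n) :=
  Function.iterate_succ_apply' _ n 1

lemma tauDist_zero : tauDist κ C 0 = 0 := rfl

lemma tauDist_one_apply (x : S) : tauDist κ C 1 x = (κ x).real C := rfl

lemma tabooOp_tauDist_succ (n : ℕ) : tabooOp κ C (tauDist κ C (n + 1)) = tauDist κ C (n + 2) :=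
  rfl

lemma tauDist_succ_eq_iterate (n : ℕ) :
    tauDist κ C (n + 1) = (tabooOp κ C)^[n] (tauDist κ C 1) := by
  induction n with
  | zero => rfl
  | succ n ih => rw [Function.iterate_succ_apply', ← ih]; rfl

lemma tauDist_one_eq_one_sub [IsMarkovKernel κ] (hC : MeasurableSet C) :
    tauDist κ C 1 = 1 - tabooOp κ C 1 := by
  funext x
  have hcompl : tabooOp κ C 1 x = (κ x).real Cᶜ := by
    simp [tabooOp_eq_setIntegral hC]
  rw [Pi.sub_apply, hcompl, probReal_compl_eq_one_sub hC, tauDist_one_apply, Pi.one_apply]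
  ring

lemma one_mem_unitFns : (1 : S → ℝ) ∈ unitFns S :=
  ⟨measurable_const, fun _ => ⟨zero_le_one, le_rfl⟩⟩

lemma tauDist_mem_unitFns [IsMarkovKernel κ] (hC : MeasurableSet C) (n : ℕ) :
    tauDist κ C n ∈ unitFns S := by
  cases n with
  | zero => exact ⟨measurable_const, fun _ => ⟨le_rfl, zero_le_one⟩⟩
  | succ n =>
    rw [tauDist_succ_eq_iterate]
    refine (mapsTo_tabooOp hC).iterate n ?_
    exact ⟨(κ.measurable_coe hC).ennreal_toReal,
      fun x => ⟨ENNReal.toReal_nonneg, measureReal_le_one⟩⟩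

lemma survProb_mem_unitFns [IsMarkovKernel κ] (hC : MeasurableSet C) (n : ℕ) :
    survProb κ C n ∈ unitFns S :=
  (mapsTo_tabooOp hC).iterate n one_mem_unitFns

lemma iterate_tabooOp_sub [IsMarkovKernel κ] (hC : MeasurableSet C) {f g : S → ℝ}
    (hf : f ∈ unitFns S) (hg : g ∈ unitFns S) (n : ℕ) :
    (tabooOp κ C)^[n] (f - g) = (tabooOp κ C)^[n] f - (tabooOp κ C)^[n] g := by
  induction n with
  | zero => rfl
  | succ n ih =>
    funext x
    simp only [Function.iterate_succ_apply', ih]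
    exact tabooOp_sub hC (.of_mem_unitFns ((mapsTo_tabooOp hC).iterate n hf))
      (.of_mem_unitFns ((mapsTo_tabooOp hC).iterate n hg))

lemma tauDist_succ_eq_survProb_sub [IsMarkovKernel κ] (hC : MeasurableSet C) (n : ℕ) :
    tauDist κ C (n + 1) = survProb κ C n - survProb κ C (n + 1) := by
  rw [tauDist_succ_eq_iterate, tauDist_one_eq_one_sub hC,
    iterate_tabooOp_sub hC one_mem_unitFns ((mapsTo_tabooOp hC) one_mem_unitFns),
    ← Function.iterate_succ_apply]
  rfl

lemma sum_range_succ_tauDist [IsMarkovKernel κ] (hC : MeasurableSet C) (N : ℕ) (x : S) :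
    ∑ n ∈ range (N + 1), tauDist κ C n x = 1 - survProb κ C N x := by
  simp only [sum_range_succ', tauDist_succ_eq_survProb_sub hC, Pi.sub_apply, sum_range_sub']
  simp [tauDist, survProb]

lemma survProb_succ_le [IsMarkovKernel κ] (hC : MeasurableSet C) {V : S → ℝ} {lam : ℝ}
    (hV1 : ∀ x, 1 ≤ V x) (hlam0 : 0 < lam) (hVint : ∀ x, Integrable V (κ x))
    (hout : ∀ x ∉ C, ∫ y, V y ∂κ x ≤ lam * V x) (n : ℕ) (x : S) :
    survProb κ C (n + 1) x ≤ lam ^ n * ∫ y, V y ∂κ x := by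
  induction n generalizing x with
  | zero =>
    simpa [survProb] using tabooOp_le_integral (f := 1) hC (integrable_const 1) (hVint x)
      (fun y => zero_le_one.trans (hV1 y)) fun y _ => hV1 y
  | succ n ih =>
    have hle : ∀ y ∉ C, survProb κ C (n + 1) y ≤ lam ^ (n + 1) * V y := fun y hy =>
      calc survProb κ C (n + 1) y ≤ lam ^ n * (lam * V y) :=
            (ih y).trans (mul_le_mul_of_nonneg_left (hout y hy) (by positivity))
        _ = lam ^ (n + 1) * V y := by ring
    rw [survProb_succ, ← integral_const_mul]
    exact tabooOp_le_integral hC (.of_mem_unitFns (survProb_mem_unitFns hC _))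
      ((hVint x).const_mul _) (fun y => by have := hV1 y; positivity) hle

lemma tendsto_survProb [IsMarkovKernel κ] (hC : MeasurableSet C) {V : S → ℝ} {lam : ℝ}
    (hV1 : ∀ x, 1 ≤ V x) (hlam0 : 0 < lam) (hlam1 : lam < 1) (hVint : ∀ x, Integrable V (κ x))
    (hout : ∀ x ∉ C, ∫ y, V y ∂κ x ≤ lam * V x) (x : S) :
    Tendsto (fun n => survProb κ C n x) atTop (nhds 0) := by
  rw [← tendsto_add_atTop_iff_nat 1]
  have hgeom := (tendsto_pow_atTop_nhds_zero_of_lt_one hlam0.le hlam1).mul_const (∫ y, V y ∂κ x)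
  rw [zero_mul] at hgeom
  exact squeeze_zero (fun n => ((survProb_mem_unitFns hC _).2 x).1)
    (fun n => survProb_succ_le hC hV1 hlam0 hVint hout n x) hgeom

lemma hasSum_tauDist [IsMarkovKernel κ] (hC : MeasurableSet C) {V : S → ℝ} {lam : ℝ}
    (hV1 : ∀ x, 1 ≤ V x) (hlam0 : 0 < lam) (hlam1 : lam < 1) (hVint : ∀ x, Integrable V (κ x))
    (hout : ∀ x ∉ C, ∫ y, V y ∂κ x ≤ lam * V x) (x : S) :
    HasSum (fun n => tauDist κ C n x) 1 := by
  rw [hasSum_iff_tendsto_nat_of_nonneg (fun n => ((tauDist_mem_unitFns hC n).2 x).1),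
    ← tendsto_add_atTop_iff_nat 1]
  simp only [sum_range_succ_tauDist hC]
  simpa using (tendsto_survProb hC hV1 hlam0 hlam1 hVint hout x).const_sub 1

/-- `pgfPartialSum κ C r N x = E^x(r^τ; τ ≤ N)`. -/
noncomputable def pgfPartialSum (κ : Kernel S S) (C : Set S) (r : ℝ) (N : ℕ) (x : S) : ℝ :=
  ∑ n ∈ range (N + 1), r ^ n * tauDist κ C n x

variable {r : ℝ} {N : ℕ}

lemma integrable_pgfPartialSum [IsMarkovKernel κ] (hC : MeasurableSet C) (x : S) :
    Integrable (pgfPartialSum κ C r N) (κ x) :=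
  integrable_finsetSum _ fun n _ =>
    (Integrable.of_mem_unitFns (tauDist_mem_unitFns hC n)).const_mul _

lemma pgfPartialSum_succ [IsMarkovKernel κ] (hC : MeasurableSet C) (x : S) :
    pgfPartialSum κ C r (N + 1) x =
      r * ((κ x).real C + tabooOp κ C (pgfPartialSum κ C r N) x) := by
  have hT : tabooOp κ C (pgfPartialSum κ C r N) x =
      ∑ n ∈ range N, r ^ (n + 1) * tauDist κ C (n + 2) x := by
    unfold pgfPartialSum
    rw [tabooOp_finsetSum hC _
      fun n _ => (Integrable.of_mem_unitFns (tauDist_mem_unitFns hC n)).const_mul _]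
    simp only [tabooOp_const_mul hC, sum_range_succ', tabooOp_tauDist_succ, tauDist_zero,
      tabooOp_zero, mul_zero, add_zero]
  rw [hT, pgfPartialSum, sum_range_succ', sum_range_succ', mul_add, mul_sum]
  simp only [tauDist_zero, tauDist_one_apply, Pi.zero_apply, mul_zero, add_zero, zero_add, pow_one,
    ← mul_assoc, ← pow_succ']
  exact add_comm _ _

lemma pgfPartialSum_succ_le [IsMarkovKernel κ] (hC : MeasurableSet C) {V : S → ℝ} (hr : 0 ≤ r)
    (hV1 : ∀ x, 1 ≤ V x) (hVint : ∀ x, Integrable V (κ x))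
    (hle : ∀ y ∉ C, pgfPartialSum κ C r N y ≤ V y) (x : S) :
    pgfPartialSum κ C r (N + 1) x ≤ r * ∫ y, V y ∂κ x := by
  rw [pgfPartialSum_succ hC]
  exact mul_le_mul_of_nonneg_left (measureReal_add_tabooOp_le_integral hC
    (integrable_pgfPartialSum hC x) (hVint x) (fun y _ => hV1 y) hle) hr

lemma pgfPartialSum_le_of_notMem [IsMarkovKernel κ] (hC : MeasurableSet C) {V : S → ℝ} {lam : ℝ}
    (hr : 0 ≤ r) (hrlam : r * lam ≤ 1) (hV1 : ∀ x, 1 ≤ V x) (hVint : ∀ x, Integrable V (κ x))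
    (hout : ∀ x ∉ C, ∫ y, V y ∂κ x ≤ lam * V x) (N : ℕ) :
    ∀ x ∉ C, pgfPartialSum κ C r N x ≤ V x := by
  induction N with
  | zero =>
    intro x _
    simpa [pgfPartialSum, tauDist_zero] using zero_le_one.trans (hV1 x)
  | succ N ih =>
    intro x hx
    calc pgfPartialSum κ C r (N + 1) x ≤ r * ∫ y, V y ∂κ x :=
          pgfPartialSum_succ_le hC hr hV1 hVint ih x
      _ ≤ r * (lam * V x) := mul_le_mul_of_nonneg_left (hout x hx) hr
      _ ≤ V x := by nlinarith [hV1 x]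

lemma tsum_le_of_pgfPartialSum_succ_le [IsMarkovKernel κ] (hC : MeasurableSet C) (hr : 0 ≤ r)
    {x : S} {c : ℝ} (h : ∀ N, pgfPartialSum κ C r (N + 1) x ≤ c) :
    ∑' n, r ^ n * tauDist κ C n x ≤ c := by
  have hnonneg (n : ℕ) : 0 ≤ r ^ n * tauDist κ C n x :=
    mul_nonneg (pow_nonneg hr n) ((tauDist_mem_unitFns hC n).2 x).1
  refine Real.tsum_le_of_sum_range_le hnonneg fun N => le_trans ?_ (h N)
  exact sum_le_sum_of_subset_of_nonneg (range_subset_range.2 (by omega)) fun n _ _ => hnonneg n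

end ReturnTime

theorem stmt13_general {S : Type*} [MeasurableSpace S] (κ : Kernel S S) [IsMarkovKernel κ]
    (C : Set S) (hC : MeasurableSet C)
    (V : S → ℝ) (hV1 : ∀ x, 1 ≤ V x)
    (lam K : ℝ) (hlam0 : 0 < lam) (hlam1 : lam < 1)
    (hVint : ∀ x, Integrable V (κ x))
    (hout : ∀ x ∉ C, ∫ y, V y ∂(κ x) ≤ lam * V x)
    (hin : ∀ x ∈ C, ∫ y, V y ∂(κ x) ≤ K) :
    (∀ x, HasSum (fun n => tauDist κ C n x) 1) ∧
      ∀ r : ℝ, 1 ≤ r → r ≤ lam⁻¹ → ∀ x : S,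
        (x ∉ C → ∑' n, r ^ n * tauDist κ C n x ≤ V x) ∧
        (x ∈ C → ∑' n, r ^ n * tauDist κ C n x ≤ r * K) := by
  refine ⟨hasSum_tauDist hC hV1 hlam0 hlam1 hVint hout, fun r hr1 hrlam x => ?_⟩
  have hr : 0 ≤ r := zero_le_one.trans hr1
  have hrlam' : r * lam ≤ 1 := by rwa [← mul_one lam⁻¹, le_inv_mul_iff₀' hlam0] at hrlam
  have hoff := pgfPartialSum_le_of_notMem hC hr hrlam' hV1 hVint hout
  refine ⟨fun hx => tsum_le_of_pgfPartialSum_succ_le hC hr fun N => hoff (N + 1) x hx,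
    fun hx => tsum_le_of_pgfPartialSum_succ_le hC hr fun N => ?_⟩
  calc pgfPartialSum κ C r (N + 1) x ≤ r * ∫ y, V y ∂κ x :=
        pgfPartialSum_succ_le hC hr hV1 hVint (hoff N) x
    _ ≤ r * K := mul_le_mul_of_nonneg_left (hin x hx) hr

theorem stmt13 {S : Type*} [MeasurableSpace S] (κ : Kernel S S) [IsMarkovKernel κ]
    (C : Set S) (hC : MeasurableSet C)
    (V : S → ℝ) (hVm : Measurable V) (hV1 : ∀ x, 1 ≤ V x)
    (lam K : ℝ) (hlam0 : 0 < lam) (hlam1 : lam < 1)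
    (hVint : ∀ x, Integrable V (κ x))
    (hout : ∀ x ∉ C, ∫ y, V y ∂(κ x) ≤ lam * V x)
    (hin : ∀ x ∈ C, ∫ y, V y ∂(κ x) ≤ K) :
    (∀ x, HasSum (fun n => tauDist κ C n x) 1) ∧
      ∀ r : ℝ, 1 ≤ r → r ≤ lam⁻¹ → ∀ x : S,
        (x ∉ C → ∑' n, r ^ n * tauDist κ C n x ≤ V x) ∧
        (x ∈ C → ∑' n, r ^ n * tauDist κ C n x ≤ r * K) :=
  stmt13_general κ C hC V hV1 lam K hlam0 hlam1 hVint hout hin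
end

section
/- Let P be the transition operator of a Markov chain reversible with respect to probability measure π, which is V-uniformly ergodic with spectral radius ρ_V of P − 1⊗π on the V-weighted sup-norm space B_V. Then for every f ∈ L²(π): ‖P^n f − ∫f dπ‖_{L²(π)} ≤ ρ_V^n ‖f − ∫f dπ‖_{L²(π)}; in particular the L²(π)-spectral radius of P − 1⊗π is at most ρ_V. -/
open MeasureTheory ProbabilityTheory

/-- The `n`-step transition kernel of a Markov chain with one-step kernel `κ`. -/
noncomputable def iterKer {S : Type*} [MeasurableSpace S] (κ : Kernel S S) :
    ℕ → Kernel S S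
  | 0 => Kernel.id
  | n + 1 => κ ∘ₖ iterKer κ n

/-!
Let `P` be the transition operator and `g` bounded measurable with `π g = 0`. Reversibility makes
`P` self-adjoint on `L²(π)`, so `B m := ‖P^(n m) g‖² = ⟪g, P^(2 n m) g⟫`. Cauchy–Schwarz gives
`(B m)² ≤ B 0 · B (2 m)`, and `V`-uniform ergodicity gives `B m ≤ C γ^(2 n m)` for every `γ > ρ_V`
(integrate `|g| · |P^k g| ≤ c M V γ^k` against `π`). Along `m = 2^k` these two facts are compatible
only if `B 1 ≤ γ^(2n) B 0`, that is `‖P^n g‖ ≤ γ^n ‖g‖`; now let `γ ↓ ρ_V`.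
For `f ∈ L²(π)` approximate by simple functions: invariance of `π` (a consequence of
reversibility) makes `P^n f` well defined `π`-a.e. and gives pointwise convergence `π`-a.e.,
and Fatou's lemma for `eLpNorm` passes the estimate to the limit.
-/

open Filter Topology
open scoped ENNReal

section PowerTrick

lemma le_one_of_sq_le_two_mul {b : ℕ → ℝ} (hsq : ∀ m, b m ^ 2 ≤ b (2 * m))
    (hb : BddAbove (Set.range b)) : b 1 ≤ 1 := by
  by_contra! h
  have hpow : ∀ k, b 1 ^ 2 ^ k ≤ b (2 ^ k) := by
    intro k
    induction k with
    | zero => simp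
    | succ k ih =>
      calc b 1 ^ 2 ^ (k + 1) = (b 1 ^ 2 ^ k) ^ 2 := by rw [pow_succ, pow_mul]
        _ ≤ b (2 ^ k) ^ 2 := pow_le_pow_left₀ (by positivity) ih 2
        _ ≤ b (2 ^ (k + 1)) := by rw [pow_succ' 2 k]; exact hsq _
  obtain ⟨C, hC⟩ := hb
  obtain ⟨k, hk⟩ := pow_unbounded_of_one_lt C h
  have hk' : b 1 ^ k ≤ b 1 ^ 2 ^ k := pow_le_pow_right₀ h.le Nat.lt_two_pow_self.le
  linarith [hC ⟨2 ^ k, rfl⟩, hpow k]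

lemma le_mul_of_sq_le_mul_two_mul {B : ℕ → ℝ} {C δ : ℝ} (hδ : 0 < δ) (h0 : 0 ≤ B 0)
    (hsq : ∀ m, B m ^ 2 ≤ B 0 * B (2 * m)) (hB : ∀ m, B m ≤ C * δ ^ m) :
    B 1 ≤ δ * B 0 := by
  rcases h0.eq_or_lt with h0 | h0
  · have := hsq 1
    rw [← h0] at this ⊢
    nlinarith
  · have key := le_one_of_sq_le_two_mul (b := fun m => B m / (δ ^ m * B 0)) (fun m => ?_)
      ⟨C / B 0, ?_⟩
    · rwa [div_le_one (by positivity), pow_one] at key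
    · rw [div_pow, div_le_div_iff₀ (by positivity) (by positivity)]
      calc B m ^ 2 * (δ ^ (2 * m) * B 0) ≤ B 0 * B (2 * m) * (δ ^ (2 * m) * B 0) := by
            gcongr; exact hsq m
        _ = B (2 * m) * (δ ^ m * B 0) ^ 2 := by ring
    · rintro _ ⟨m, rfl⟩
      rw [div_le_div_iff₀ (by positivity) h0]
      calc B m * B 0 ≤ C * δ ^ m * B 0 := by gcongr; exact hB m
        _ = C * (δ ^ m * B 0) := by ring

end PowerTrick

section L2

variable {α : Type*} [MeasurableSpace α] {μ : Measure α}

lemma abs_sub_integral_le [IsProbabilityMeasure μ] {f : α → ℝ} {c : ℝ} (hfb : ∀ x, |f x| ≤ c)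
    (x : α) : |f x - ∫ y, f y ∂μ| ≤ 2 * c := by
  have : |∫ y, f y ∂μ| ≤ c := by
    simpa using norm_integral_le_of_norm_le_const (μ := μ) (f := f) (ae_of_all _ hfb)
  calc |f x - ∫ y, f y ∂μ| ≤ |f x| + |∫ y, f y ∂μ| := abs_sub _ _
    _ ≤ 2 * c := by linarith [hfb x]

lemma MeasureTheory.MemLp.eLpNorm_two_eq_sqrt {u : α → ℝ} (hu : MemLp u 2 μ) :
    eLpNorm u 2 μ = ENNReal.ofReal √(∫ x, u x ^ 2 ∂μ) := by
  rw [hu.eLpNorm_eq_integral_rpow_norm two_ne_zero ENNReal.ofNat_ne_top, Real.sqrt_eq_rpow]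
  simp [one_div]

lemma MeasureTheory.MemLp.inner_toLp {u v : α → ℝ} (hu : MemLp u 2 μ) (hv : MemLp v 2 μ) :
    inner ℝ (hu.toLp u) (hv.toLp v) = ∫ x, u x * v x ∂μ := by
  rw [L2.inner_def]
  refine integral_congr_ae ?_
  filter_upwards [hu.coeFn_toLp, hv.coeFn_toLp] with x hxu hxv
  simp [hxu, hxv, mul_comm]

lemma sq_integral_mul_le {u v : α → ℝ} (hu : MemLp u 2 μ) (hv : MemLp v 2 μ) :
    (∫ x, u x * v x ∂μ) ^ 2 ≤ (∫ x, u x ^ 2 ∂μ) * ∫ x, v x ^ 2 ∂μ := by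
  have := real_inner_mul_inner_self_le (hu.toLp u) (hv.toLp v)
  simp only [hu.inner_toLp, hv.inner_toLp] at this
  simpa only [sq] using this

lemma eLpNorm_le_mul_of_tendsto {F G : ℕ → α → ℝ} {F' G' : α → ℝ} {p r : ℝ≥0∞} (hp : 1 ≤ p)
    (hr : r ≠ ∞) (hFm : ∀ k, AEStronglyMeasurable (F k) μ)
    (hF : ∀ᵐ x ∂μ, Tendsto (fun k => F k x) atTop (𝓝 (F' x)))
    (hGm : ∀ k, AEStronglyMeasurable (G k) μ) (hG'm : AEStronglyMeasurable G' μ)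
    (hG : Tendsto (fun k => eLpNorm (G k - G') p μ) atTop (𝓝 0))
    (hle : ∀ k, eLpNorm (F k) p μ ≤ r * eLpNorm (G k) p μ) :
    eLpNorm F' p μ ≤ r * eLpNorm G' p μ := by
  have htri : ∀ k, eLpNorm (G k) p μ ≤ eLpNorm G' p μ + eLpNorm (G k - G') p μ := fun k => by
    simpa using eLpNorm_add_le hG'm ((hGm k).sub hG'm) hp
  have hlim : Tendsto (fun k => r * (eLpNorm G' p μ + eLpNorm (G k - G') p μ)) atTop
      (𝓝 (r * (eLpNorm G' p μ + 0))) :=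
    ENNReal.Tendsto.const_mul (tendsto_const_nhds.add hG) (Or.inr hr)
  calc eLpNorm F' p μ ≤ atTop.liminf fun k => eLpNorm (F k) p μ :=
        Lp.eLpNorm_lim_le_liminf_eLpNorm hFm F' hF
    _ ≤ atTop.liminf fun k => r * (eLpNorm G' p μ + eLpNorm (G k - G') p μ) :=
        liminf_le_liminf (Eventually.of_forall fun k => (hle k).trans (by gcongr; exact htri k))
    _ = r * eLpNorm G' p μ := by rw [hlim.liminf_eq, add_zero]

end L2

section IterKer

variable {S : Type*} [MeasurableSpace S]

lemma iterKer_add (κ : Kernel S S) (a b : ℕ) :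
    iterKer κ (a + b) = iterKer κ a ∘ₖ iterKer κ b := by
  induction a with
  | zero => simp [iterKer, Kernel.id_comp]
  | succ a ih => rw [Nat.add_right_comm, iterKer, ih, iterKer, Kernel.comp_assoc]

lemma iterKer_one (κ : Kernel S S) : iterKer κ 1 = κ := Kernel.comp_id κ

instance isMarkovKernel_iterKer (κ : Kernel S S) [IsMarkovKernel κ] (n : ℕ) :
    IsMarkovKernel (iterKer κ n) := by
  induction n with
  | zero => rw [iterKer]; infer_instance
  | succ n ih => rw [iterKer]; infer_instance

end IterKer

namespace ProbabilityTheory.Kernel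

variable {S : Type*} [MeasurableSpace S] {κ : Kernel S S} {π : Measure S}

lemma Invariant.iterKer_invariant (hκ : κ.Invariant π) (n : ℕ) : (iterKer κ n).Invariant π := by
  induction n with
  | zero => exact Measure.id_comp
  | succ n ih => exact hκ.comp ih

lemma Invariant.ae_ae (hκ : κ.Invariant π) {p : S → Prop} (h : ∀ᵐ y ∂π, p y) :
    ∀ᵐ x ∂π, ∀ᵐ y ∂κ x, p y :=
  Measure.ae_ae_of_ae_comp (by rwa [hκ.def])

lemma Invariant.ae_integrable (hκ : κ.Invariant π) {f : S → ℝ} (hf : Integrable f π) :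
    ∀ᵐ x ∂π, Integrable f (κ x) :=
  ((Measure.integrable_comp_iff (by rw [hκ.def]; exact hf.1)).1 (by rwa [hκ.def])).1

lemma isReversible_of_setIntegral_toReal [IsFiniteKernel κ] [IsFiniteMeasure π]
    (h : ∀ A B : Set S, MeasurableSet A → MeasurableSet B →
      ∫ x in A, (κ x B).toReal ∂π = ∫ x in B, (κ x A).toReal ∂π) :
    κ.IsReversible π := by
  intro A B hA hB
  have hfin : ∀ {A B : Set S}, MeasurableSet A → MeasurableSet B → ∫⁻ x in A, κ x B ∂π ≠ ∞ :=
    fun hA hB => Measure.compProd_apply_prod (μ := π) (κ := κ) hA hB ▸ measure_ne_top _ _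
  have := h A B hA hB
  rw [integral_toReal (κ.measurable_coe hB).aemeasurable (ae_of_all _ fun _ => measure_lt_top _ _),
    integral_toReal (κ.measurable_coe hA).aemeasurable (ae_of_all _ fun _ => measure_lt_top _ _)]
    at this
  exact (ENNReal.toReal_eq_toReal_iff' (hfin hA hB) (hfin hB hA)).1 this

lemma IsReversible.map_swap_compProd [IsFiniteKernel κ] [IsFiniteMeasure π]
    (h : κ.IsReversible π) : (π ⊗ₘ κ).map Prod.swap = π ⊗ₘ κ := by
  refine ext_of_generate_finite _ generateFrom_prod.symm isPiSystem_prod ?_ ?_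
  · rintro _ ⟨A, hA, B, hB, rfl⟩
    rw [Measure.map_apply measurable_swap (hA.prod hB), Set.preimage_swap_prod,
      Measure.compProd_apply_prod hB hA, Measure.compProd_apply_prod hA hB]
    exact h hB hA
  · rw [Measure.map_apply measurable_swap MeasurableSet.univ, Set.preimage_univ]

end ProbabilityTheory.Kernel

section MarkovOperator

variable {S : Type*} [MeasurableSpace S]

noncomputable def markovOp (K : Kernel S S) (f : S → ℝ) (x : S) : ℝ := ∫ y, f y ∂K x

variable {K η : Kernel S S} {f g : S → ℝ} {c : ℝ}

lemma integrable_of_abs_le {μ : Measure S} [IsFiniteMeasure μ] (hf : Measurable f)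
    (hfb : ∀ x, |f x| ≤ c) : Integrable f μ :=
  .of_bound hf.aestronglyMeasurable c (ae_of_all _ hfb)

lemma memLp_of_abs_le {μ : Measure S} [IsFiniteMeasure μ] (hf : Measurable f)
    (hfb : ∀ x, |f x| ≤ c) (p : ℝ≥0∞) : MemLp f p μ :=
  .of_bound hf.aestronglyMeasurable c (ae_of_all _ hfb)

lemma measurable_markovOp (hf : Measurable f) : Measurable (markovOp K f) :=
  hf.stronglyMeasurable.integral_kernel.measurable

lemma abs_markovOp_le [IsMarkovKernel K] (hf : ∀ x, |f x| ≤ c) (x : S) :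
    |markovOp K f x| ≤ c := by
  simpa [markovOp] using norm_integral_le_of_norm_le_const (μ := K x) (f := f) (ae_of_all _ hf)

lemma markovOp_id (hf : Measurable f) : markovOp Kernel.id f = f :=
  funext fun x => by rw [markovOp, Kernel.id_apply, integral_dirac' f x hf.stronglyMeasurable]

lemma markovOp_comp [IsFiniteKernel K] [IsFiniteKernel η] (hf : Measurable f)
    (hfb : ∀ x, |f x| ≤ c) : markovOp (η ∘ₖ K) f = markovOp K (markovOp η f) :=
  funext fun _ => Kernel.integral_comp (integrable_of_abs_le hf hfb)

lemma markovOp_sub_const [IsMarkovKernel K] (hf : Measurable f) (hfb : ∀ x, |f x| ≤ c)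
    (a : ℝ) (x : S) : markovOp K (fun y => f y - a) x = markovOp K f x - a := by
  rw [markovOp, integral_sub (integrable_of_abs_le hf hfb) (integrable_const a)]
  simp [markovOp]

variable {π : Measure S} [IsFiniteMeasure π]

lemma integral_markovOp_mul [IsFiniteKernel K] (hK : K.IsReversible π)
    (hf : Measurable f) {cf : ℝ} (hfb : ∀ x, |f x| ≤ cf)
    (hg : Measurable g) {cg : ℝ} (hgb : ∀ x, |g x| ≤ cg) :
    ∫ x, markovOp K f x * g x ∂π = ∫ x, f x * markovOp K g x ∂π := by
  have hint : ∀ {u v : S → ℝ} {cu cv : ℝ}, Measurable u → (∀ x, |u x| ≤ cu) →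
      Measurable v → (∀ x, |v x| ≤ cv) → Integrable (fun p : S × S => u p.2 * v p.1) (π ⊗ₘ K) :=
    fun hu hub hv hvb =>
      integrable_of_abs_le ((hu.comp measurable_snd).mul (hv.comp measurable_fst)) fun p => by
        rw [abs_mul]
        exact mul_le_mul (hub _) (hvb _) (abs_nonneg _) ((abs_nonneg _).trans (hub p.2))
  calc ∫ x, markovOp K f x * g x ∂π = ∫ p : S × S, f p.2 * g p.1 ∂(π ⊗ₘ K) := by
        rw [Measure.integral_compProd (hint hf hfb hg hgb)]
        simp only [markovOp, integral_mul_const]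
    _ = ∫ p : S × S, f p.1 * g p.2 ∂(π ⊗ₘ K) := by
        conv_lhs => rw [← hK.map_swap_compProd]
        exact integral_map measurable_swap.aemeasurable
          ((hf.comp measurable_snd).mul (hg.comp measurable_fst)).aestronglyMeasurable
    _ = ∫ x, f x * markovOp K g x ∂π := by
        rw [Measure.integral_compProd
          ((hint hg hgb hf hfb).congr (ae_of_all _ fun _ => mul_comm _ _))]
        simp only [markovOp, integral_const_mul]

end MarkovOperator

section Iterates

variable {S : Type*} [MeasurableSpace S] {κ : Kernel S S} [IsMarkovKernel κ]
  {π : Measure S} [IsFiniteMeasure π] {f g : S → ℝ} {c : ℝ}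

lemma markovOp_iterKer_add (hf : Measurable f) (hfb : ∀ x, |f x| ≤ c) (a b : ℕ) :
    markovOp (iterKer κ (a + b)) f = markovOp (iterKer κ b) (markovOp (iterKer κ a) f) := by
  rw [iterKer_add, markovOp_comp hf hfb]

lemma integral_markovOp_iterKer_mul (hκ : κ.IsReversible π) (n : ℕ)
    (hf : Measurable f) {cf : ℝ} (hfb : ∀ x, |f x| ≤ cf)
    (hg : Measurable g) {cg : ℝ} (hgb : ∀ x, |g x| ≤ cg) :
    ∫ x, markovOp (iterKer κ n) f x * g x ∂π = ∫ x, f x * markovOp (iterKer κ n) g x ∂π := by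
  induction n generalizing f cf with
  | zero => rw [iterKer, markovOp_id hf, markovOp_id hg]
  | succ n ih =>
    calc ∫ x, markovOp (iterKer κ (n + 1)) f x * g x ∂π
        = ∫ x, markovOp (iterKer κ n) (markovOp κ f) x * g x ∂π := by
          rw [show iterKer κ (n + 1) = κ ∘ₖ iterKer κ n from rfl, markovOp_comp hf hfb]
      _ = ∫ x, markovOp κ f x * markovOp (iterKer κ n) g x ∂π :=
          ih (measurable_markovOp hf) (abs_markovOp_le hfb)
      _ = ∫ x, f x * markovOp κ (markovOp (iterKer κ n) g) x ∂π :=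
          integral_markovOp_mul hκ hf hfb (measurable_markovOp hg) (abs_markovOp_le hgb)
      _ = ∫ x, f x * markovOp (iterKer κ (n + 1)) g x ∂π := by
          rw [markovOp_iterKer_add hg hgb n 1, iterKer_one]

lemma integral_sq_markovOp_iterKer (hκ : κ.IsReversible π) (hg : Measurable g)
    (hgb : ∀ x, |g x| ≤ c) (k : ℕ) :
    ∫ x, markovOp (iterKer κ k) g x ^ 2 ∂π = ∫ x, g x * markovOp (iterKer κ (k + k)) g x ∂π := by
  simp_rw [sq]
  rw [integral_markovOp_iterKer_mul hκ k hg hgb (measurable_markovOp hg) (abs_markovOp_le hgb),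
    ← markovOp_iterKer_add hg hgb]

theorem integral_sq_markovOp_iterKer_le (hκ : κ.IsReversible π) (hg : Measurable g)
    (hgb : ∀ x, |g x| ≤ c) {ρ : ℝ} (hρ : 0 ≤ ρ)
    (hdecay : ∀ γ, ρ < γ → ∃ C, ∀ m, ∫ x, g x * markovOp (iterKer κ m) g x ∂π ≤ C * γ ^ m)
    (n : ℕ) :
    ∫ x, markovOp (iterKer κ n) g x ^ 2 ∂π ≤ (ρ ^ n) ^ 2 * ∫ x, g x ^ 2 ∂π := by
  have hγ : ∀ γ, ρ < γ →
      ∫ x, markovOp (iterKer κ n) g x ^ 2 ∂π ≤ (γ ^ n) ^ 2 * ∫ x, g x ^ 2 ∂π := by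
    intro γ hργ
    obtain ⟨C, hC⟩ := hdecay γ hργ
    set B : ℕ → ℝ := fun m => ∫ x, markovOp (iterKer κ (n * m)) g x ^ 2 ∂π
    have hB0 : B 0 = ∫ x, g x ^ 2 ∂π := by simp [B, iterKer, markovOp_id hg]
    have hB : ∀ m, B m = ∫ x, g x * markovOp (iterKer κ (n * (2 * m))) g x ∂π := fun m => by
      rw [show n * (2 * m) = n * m + n * m by ring]
      exact integral_sq_markovOp_iterKer hκ hg hgb _
    have hP : ∀ k, MemLp (markovOp (iterKer κ k) g) 2 π := fun k =>
      memLp_of_abs_le (measurable_markovOp hg) (abs_markovOp_le hgb) 2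
    have key := le_mul_of_sq_le_mul_two_mul (B := B) (C := C) (δ := (γ ^ n) ^ 2)
      (by have := hρ.trans_lt hργ; positivity) (integral_nonneg fun _ => sq_nonneg _)
      (fun m => by
        rw [hB m, hB0]
        exact sq_integral_mul_le (memLp_of_abs_le hg hgb 2) (hP _))
      (fun m => by
        rw [hB m, ← pow_mul, ← pow_mul]
        exact hC _)
    simpa [B, hB0] using key
  have hlim : Tendsto (fun γ => (γ ^ n) ^ 2 * ∫ x, g x ^ 2 ∂π) (𝓝[>] ρ)
      (𝓝 ((ρ ^ n) ^ 2 * ∫ x, g x ^ 2 ∂π)) :=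
    (((continuous_pow n).pow 2).mul continuous_const).tendsto ρ |>.mono_left nhdsWithin_le_nhds
  exact ge_of_tendsto hlim (eventually_nhdsWithin_of_forall hγ)

end Iterates

section Ergodic

variable {S : Type*} [MeasurableSpace S] {κ : Kernel S S} [IsMarkovKernel κ]
  {π : Measure S} [IsProbabilityMeasure π] {V : S → ℝ} {ρ : ℝ} {f : S → ℝ} {c : ℝ}

def IsVUniformlyErgodic (κ : Kernel S S) (π : Measure S) (V : S → ℝ) (ρ : ℝ) : Prop :=
  ∀ γ : ℝ, ρ < γ → ∃ M : ℝ, ∀ g : S → ℝ, Measurable g → (∀ x, |g x| ≤ V x) →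
    ∀ (n : ℕ) (x : S), |markovOp (iterKer κ n) g x - ∫ y, g y ∂π| ≤ M * V x * γ ^ n

lemma IsVUniformlyErgodic.exists_integral_mul_markovOp_le (h : IsVUniformlyErgodic κ π V ρ)
    (hV1 : ∀ x, 1 ≤ V x) (hVint : Integrable V π) (hf : Measurable f) (hfb : ∀ x, |f x| ≤ c)
    {γ : ℝ} (hγ : ρ < γ) :
    ∃ C, ∀ m, ∫ x, (f x - ∫ y, f y ∂π) *
      markovOp (iterKer κ m) (fun y => f y - ∫ z, f z ∂π) x ∂π ≤ C * γ ^ m := by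
  obtain ⟨M, hM⟩ := h γ hγ
  set g := fun x => f x - ∫ y, f y ∂π
  have hg : Measurable g := hf.sub_const _
  have hgb : ∀ x, |g x| ≤ 2 * c := abs_sub_integral_le hfb
  set a := |c| + 1
  have ha : 0 < a := by positivity
  have hpt : ∀ m x, |markovOp (iterKer κ m) g x| ≤ a * (M * V x * γ ^ m) := by
    intro m x
    have hfa : ∀ y, |f y / a| ≤ V y := fun y => by
      rw [abs_div, abs_of_pos ha, div_le_iff₀ ha]
      nlinarith [hfb y, le_abs_self c, hV1 y]
    have := hM _ (hf.div_const a) hfa m x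
    simp only [markovOp, integral_div] at this
    rw [← sub_div, abs_div, abs_of_pos ha, div_le_iff₀ ha] at this
    rw [markovOp_sub_const hf hfb, mul_comm a]
    exact this
  refine ⟨2 * c * a * M * ∫ x, V x ∂π, fun m => ?_⟩
  calc ∫ x, g x * markovOp (iterKer κ m) g x ∂π
      ≤ ∫ x, (2 * c * a * M * γ ^ m) * V x ∂π := by
        refine integral_mono (integrable_of_abs_le (c := 2 * c * (2 * c))
          (hg.mul (measurable_markovOp hg)) fun x => ?_) (hVint.const_mul _) fun x => ?_
        · rw [abs_mul]
          exact mul_le_mul (hgb x) (abs_markovOp_le hgb x) (abs_nonneg _)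
            ((abs_nonneg _).trans (hgb x))
        · calc g x * markovOp (iterKer κ m) g x
              ≤ |g x| * |markovOp (iterKer κ m) g x| := by rw [← abs_mul]; exact le_abs_self _
            _ ≤ 2 * c * (a * (M * V x * γ ^ m)) := mul_le_mul (hgb x) (hpt m x) (abs_nonneg _)
                ((abs_nonneg _).trans (hgb x))
            _ = 2 * c * a * M * γ ^ m * V x := by ring
    _ = 2 * c * a * M * (∫ x, V x ∂π) * γ ^ m := by rw [integral_const_mul]; ring

theorem IsVUniformlyErgodic.eLpNorm_markovOp_iterKer_sub_le (hκ : κ.IsReversible π)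
    (h : IsVUniformlyErgodic κ π V ρ) (hV1 : ∀ x, 1 ≤ V x) (hVint : Integrable V π)
    (hρ : 0 ≤ ρ) (hf : Measurable f) (hfb : ∀ x, |f x| ≤ c) (n : ℕ) :
    eLpNorm (fun x => markovOp (iterKer κ n) f x - ∫ y, f y ∂π) 2 π ≤
      ENNReal.ofReal (ρ ^ n) * eLpNorm (fun x => f x - ∫ y, f y ∂π) 2 π := by
  set g := fun x => f x - ∫ y, f y ∂π
  have hg : Measurable g := hf.sub_const _
  have hgb : ∀ x, |g x| ≤ 2 * c := abs_sub_integral_le hfb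
  have hPg : (fun x => markovOp (iterKer κ n) f x - ∫ y, f y ∂π) = markovOp (iterKer κ n) g :=
    funext fun x => (markovOp_sub_const hf hfb _ x).symm
  rw [hPg, (memLp_of_abs_le (measurable_markovOp hg) (abs_markovOp_le hgb) 2).eLpNorm_two_eq_sqrt,
    (memLp_of_abs_le hg hgb 2).eLpNorm_two_eq_sqrt, ← ENNReal.ofReal_mul (by positivity)]
  refine ENNReal.ofReal_le_ofReal ?_
  rw [← Real.sqrt_sq (pow_nonneg hρ n), ← Real.sqrt_mul (sq_nonneg _)]
  exact Real.sqrt_le_sqrt (integral_sq_markovOp_iterKer_le hκ hg hgb hρ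
    (fun γ hγ => h.exists_integral_mul_markovOp_le hV1 hVint hf hfb hγ) n)

end Ergodic

section Extension

variable {S : Type*} [MeasurableSpace S] {K : Kernel S S} {π : Measure S} [IsProbabilityMeasure π]

theorem eLpNorm_markovOp_sub_le_of_simpleFunc (hK : K.Invariant π) {r : ℝ≥0∞} (hr : r ≠ ∞)
    (hsimple : ∀ g : SimpleFunc S ℝ, eLpNorm (fun x => markovOp K g x - ∫ y, g y ∂π) 2 π ≤
      r * eLpNorm (fun x => g x - ∫ y, g y ∂π) 2 π)
    {f : S → ℝ} (hf : MemLp f 2 π) :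
    eLpNorm (fun x => markovOp K f x - ∫ y, f y ∂π) 2 π ≤
      r * eLpNorm (fun x => f x - ∫ y, f y ∂π) 2 π := by
  wlog hfm : Measurable f generalizing f
  · have hae := hf.1.ae_eq_mk
    have hPae : markovOp K f =ᵐ[π] markovOp K (hf.1.mk f) := by
      filter_upwards [hK.ae_ae hae] with x hx using integral_congr_ae hx
    have := this (hf.ae_eq hae) hf.1.stronglyMeasurable_mk.measurable
    rw [integral_congr_ae hae]
    convert this using 1
    · exact eLpNorm_congr_ae (hPae.sub (ae_of_all _ fun _ => rfl))
    · exact congrArg _ (eLpNorm_congr_ae (hae.sub (ae_of_all _ fun _ => rfl)))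
  set g : ℕ → SimpleFunc S ℝ :=
    fun k => SimpleFunc.approxOn f hfm (Set.range f ∪ {0}) 0 (by simp) k
  have hconv : ∀ μ : Measure S, Integrable f μ →
      Tendsto (fun k => ∫ x, g k x ∂μ) atTop (𝓝 (∫ x, f x ∂μ)) := fun μ hfμ =>
    tendsto_integral_of_dominated_convergence (fun x => ‖f x‖ + ‖f x‖)
      (fun k => (g k).aestronglyMeasurable) (hfμ.norm.add hfμ.norm)
      (fun k => ae_of_all _ fun x => SimpleFunc.norm_approxOn_zero_le hfm _ x k)
      (ae_of_all _ fun x => SimpleFunc.tendsto_approxOn hfm _ (subset_closure (by simp)))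
  have hfint := hf.integrable one_le_two
  have hmean := hconv π hfint
  refine eLpNorm_le_mul_of_tendsto one_le_two hr
    (F := fun k x => markovOp K (g k) x - ∫ y, g k y ∂π)
    (G := fun k x => g k x - ∫ y, g k y ∂π)
    (fun k => ((measurable_markovOp (g k).measurable).sub_const _).aestronglyMeasurable) ?_
    (fun k => ((g k).measurable.sub_const _).aestronglyMeasurable)
    (hfm.sub_const _).aestronglyMeasurable ?_ (fun k => hsimple (g k))
  · filter_upwards [hK.ae_integrable hfint] with x hx using (hconv (K x) hx).sub hmean
  · have hbound : ∀ k,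
        eLpNorm ((fun x => g k x - ∫ y, g k y ∂π) - fun x => f x - ∫ y, f y ∂π) 2 π ≤
          eLpNorm (⇑(g k) - f) 2 π + ‖∫ y, g k y ∂π - ∫ y, f y ∂π‖ₑ := fun k => by
      have : ((fun x => g k x - ∫ y, g k y ∂π) - fun x => f x - ∫ y, f y ∂π) =
          (⇑(g k) - f) - fun _ => ∫ y, g k y ∂π - ∫ y, f y ∂π := by
        ext x; simp only [Pi.sub_apply]; ring
      rw [this]
      refine (eLpNorm_sub_le ((g k).aestronglyMeasurable.sub hfm.aestronglyMeasurable)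
        aestronglyMeasurable_const one_le_two).trans_eq ?_
      rw [eLpNorm_const _ two_ne_zero (IsProbabilityMeasure.ne_zero π)]
      simp
    have hlim := (SimpleFunc.tendsto_approxOn_range_Lp_eLpNorm ENNReal.ofNat_ne_top hfm hf.2).add
      ((hmean.sub_const (∫ y, f y ∂π)).enorm)
    rw [sub_self, enorm_zero, add_zero] at hlim
    exact tendsto_of_tendsto_of_tendsto_of_le_of_le tendsto_const_nhds hlim
      (fun _ => zero_le) hbound

end Extension

theorem stmt18_general {S : Type*} [MeasurableSpace S] (κ : Kernel S S) [IsMarkovKernel κ]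
    (π : Measure S) [IsProbabilityMeasure π]
    (hrev : ∀ A B : Set S, MeasurableSet A → MeasurableSet B →
      ∫ x in A, (κ x B).toReal ∂π = ∫ x in B, (κ x A).toReal ∂π)
    (V : S → ℝ) (hV1 : ∀ x, 1 ≤ V x) (hVint : Integrable V π)
    (ρV : ℝ) (hρ : 0 ≤ ρV)
    (herg : ∀ γ : ℝ, ρV < γ → ∃ M : ℝ, ∀ g : S → ℝ, Measurable g →
      (∀ x, |g x| ≤ V x) → ∀ (n : ℕ) (x : S),
        |(∫ y, g y ∂(iterKer κ n x)) - ∫ y, g y ∂π| ≤ M * V x * γ ^ n) :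
    ∀ f : S → ℝ, MemLp f 2 π → ∀ n : ℕ,
      eLpNorm (fun x => (∫ y, f y ∂(iterKer κ n x)) - ∫ y, f y ∂π) 2 π ≤
        ENNReal.ofReal (ρV ^ n) * eLpNorm (fun x => f x - ∫ y, f y ∂π) 2 π := by
  intro f hf n
  have hκ : κ.IsReversible π := Kernel.isReversible_of_setIntegral_toReal hrev
  refine eLpNorm_markovOp_sub_le_of_simpleFunc (hκ.invariant.iterKer_invariant n)
    ENNReal.ofReal_ne_top (fun g => ?_) hf
  obtain ⟨c, hc⟩ := g.exists_forall_norm_le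
  exact IsVUniformlyErgodic.eLpNorm_markovOp_iterKer_sub_le hκ herg hV1 hVint hρ g.measurable hc n

theorem stmt18 {S : Type*} [MeasurableSpace S] (κ : Kernel S S) [IsMarkovKernel κ]
    (π : Measure S) [IsProbabilityMeasure π]
    (hinv : ∀ A : Set S, MeasurableSet A → ∫ x, (κ x A).toReal ∂π = (π A).toReal)
    (hrev : ∀ A B : Set S, MeasurableSet A → MeasurableSet B →
      ∫ x in A, (κ x B).toReal ∂π = ∫ x in B, (κ x A).toReal ∂π)
    (V : S → ℝ) (hVm : Measurable V) (hV1 : ∀ x, 1 ≤ V x) (hVint : Integrable V π)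
    (ρV : ℝ) (hρ : 0 ≤ ρV)
    (herg : ∀ γ : ℝ, ρV < γ → ∃ M : ℝ, ∀ g : S → ℝ, Measurable g →
      (∀ x, |g x| ≤ V x) → ∀ (n : ℕ) (x : S),
        |(∫ y, g y ∂(iterKer κ n x)) - ∫ y, g y ∂π| ≤ M * V x * γ ^ n) :
    ∀ f : S → ℝ, MemLp f 2 π → ∀ n : ℕ,
      eLpNorm (fun x => (∫ y, f y ∂(iterKer κ n x)) - ∫ y, f y ∂π) 2 π ≤
        ENNReal.ofReal (ρV ^ n) * eLpNorm (fun x => f x - ∫ y, f y ∂π) 2 π :=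
  stmt18_general κ π hrev V hV1 hVint ρV hρ herg
end

section
/- For the reflecting random walk on ℤ₊ with P(i,i−1)=p > 1/2, P(i,i+1)=q=1−p for i ≥ 1 and P(0,0)=ε, P(0,1)=1−ε, the generating function of the first return time τ to state 0 starting from 0 is b(z) = εz + ((1−ε)/(2q))·(1 − (1 − 4pqz²)^{1/2}) for |z| < 1/√(4pq). If ε < (p−q)/(1+√(q/p)) then the equation b(z)=1 has exactly two real solutions in (−1/√(4pq), 1/√(4pq)): z = 1 and z = −(p−ε)/(pq + (p−ε)²). -/
open MeasureTheory ProbabilityTheory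

/-- The transition kernel of the reflecting random walk on `ℕ`:
`P(i, i-1) = p`, `P(i, i+1) = q = 1-p` for `i ≥ 1`, and `P(0,0) = ε`, `P(0,1) = 1-ε`. -/
noncomputable def rwKernel (p q ε : ℝ) : Kernel ℕ ℕ :=
  Kernel.ofFunOfCountable (fun i =>
    if i = 0 then
      ENNReal.ofReal ε • Measure.dirac 0 + ENNReal.ofReal (1 - ε) • Measure.dirac 1
    else
      ENNReal.ofReal p • Measure.dirac (i - 1) + ENNReal.ofReal q • Measure.dirac (i + 1))

/-! From level `i + 1` the walk has to pass through every lower level before it reaches `0`,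
so the hitting time of `0` has generating function `G ^ (i + 1)`, where `G = X (p + q G²)`,
i.e. `G = p X C(pq X²)` with `C` the Catalan series; `G ^ (i + 1) = X (p G ^ i + q G ^ (i + 2))`
is exactly the one-step recursion defining `tauDist`. From `0` the first step gives
`b(z) = ε z + (1 - ε) z G(z)`. On `‖w‖ < 1/4` the Catalan sum satisfies `C = 1 + w C²` and
`‖C‖ ≤ 2`, which identifies `1 - 2 w C(w)` with the principal root `(1 - 4 w) ^ (1/2)`.
On the real line, squaring `b(x) = 1` gives `(x - 1) ((pq + (p - ε)²) x + (p - ε)) = 0`; the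
condition on `ε`, which reads `ε < p - √(pq)`, makes the second root a genuine solution inside
the interval. -/

open Finset

namespace PowerSeries

variable {R : Type*} [CommRing R]

noncomputable def catalanSeriesAt (a : R) : R⟦X⟧ :=
  expand 2 two_ne_zero (rescale a (map (Nat.castRingHom R) catalanSeries))

theorem catalanSeriesAt_eq (a : R) :
    catalanSeriesAt a = 1 + C a * X ^ 2 * catalanSeriesAt a ^ 2 := by
  have h := congrArg (fun f => expand 2 two_ne_zero (rescale a (map (Nat.castRingHom R) f)))
    catalanSeries_sq_mul_X_add_one
  simp only [map_add, map_mul, map_pow, map_X, map_one, rescale_X, expand_C, expand_X] at h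
  rw [catalanSeriesAt]
  linear_combination -h

theorem coeff_two_mul_catalanSeriesAt (a : R) (m : ℕ) :
    coeff (2 * m) (catalanSeriesAt a) = catalan m * a ^ m := by
  rw [catalanSeriesAt, coeff_expand_mul, coeff_rescale, coeff_map, catalanSeries_coeff]
  simp [mul_comm]

theorem coeff_catalanSeriesAt_of_odd (a : R) {n : ℕ} (hn : Odd n) :
    coeff n (catalanSeriesAt a) = 0 :=
  coeff_expand_of_not_dvd _ _ _ (by rwa [← even_iff_two_dvd, Nat.not_even_iff_odd])

/-- The generating function `G(z, 1)` of the hitting time of `0` from `1`. -/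
noncomputable def firstPassageSeries (p q : R) : R⟦X⟧ := C p * X * catalanSeriesAt (p * q)

theorem firstPassageSeries_eq (p q : R) :
    firstPassageSeries p q = X * (C p + C q * firstPassageSeries p q ^ 2) := by
  have h := catalanSeriesAt_eq (p * q)
  rw [map_mul] at h
  unfold firstPassageSeries
  linear_combination C p * X * h

theorem coeff_succ_firstPassageSeries_pow_succ (p q : R) (n i : ℕ) :
    coeff (n + 1) (firstPassageSeries p q ^ (i + 1)) =
      p * coeff n (firstPassageSeries p q ^ i) +
        q * coeff n (firstPassageSeries p q ^ (i + 2)) := by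
  have h : firstPassageSeries p q ^ (i + 1) =
      X * (C p * firstPassageSeries p q ^ i + C q * firstPassageSeries p q ^ (i + 2)) := by
    linear_combination firstPassageSeries p q ^ i * firstPassageSeries_eq p q
  rw [h, coeff_succ_X_mul, map_add, coeff_C_mul, coeff_C_mul]

theorem constantCoeff_firstPassageSeries (p q : R) :
    constantCoeff (firstPassageSeries p q) = 0 := by
  simp [firstPassageSeries]

end PowerSeries

theorem sum_range_sum_antidiagonal_mul_le_sq {x : ℕ → ℝ} (hx : ∀ i, 0 ≤ x i) (N : ℕ) :
    ∑ m ∈ range N, ∑ ij ∈ antidiagonal m, x ij.1 * x ij.2 ≤ (∑ i ∈ range N, x i) ^ 2 := by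
  simp_rw [Nat.sum_antidiagonal_eq_sum_range_succ_mk, Nat.succ_eq_add_one]
  rw [sum_range_diag_flip (f := fun i j => x i * x j), sq, sum_mul_sum]
  gcongr with i
  · exact fun _ _ _ => mul_nonneg (hx _) (hx _)
  · exact Nat.sub_le N i

-- `2` is the fixed point of `T ↦ 1 + T² / 4`, the Catalan recursion at `t = 1/4`.
theorem sum_range_catalan_mul_pow_le_two {t : ℝ} (ht0 : 0 ≤ t) (ht : t ≤ 1 / 4) (N : ℕ) :
    ∑ m ∈ range N, (catalan m : ℝ) * t ^ m ≤ 2 := by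
  induction N with
  | zero => simp
  | succ N ih =>
    have hrec : ∑ m ∈ range N, (catalan (m + 1) : ℝ) * t ^ (m + 1) =
        t * ∑ m ∈ range N, ∑ ij ∈ antidiagonal m,
          ((catalan ij.1 : ℝ) * t ^ ij.1) * ((catalan ij.2 : ℝ) * t ^ ij.2) := by
      rw [mul_sum]
      refine sum_congr rfl fun m _ => ?_
      rw [catalan_succ', Nat.cast_sum, sum_mul, mul_sum]
      refine sum_congr rfl fun ij hij => ?_
      rw [← mem_antidiagonal.1 hij]
      push_cast
      ring
    have hsq := sum_range_sum_antidiagonal_mul_le_sq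
      (fun i => by positivity : ∀ i, 0 ≤ (catalan i : ℝ) * t ^ i) N
    have h0 : 0 ≤ ∑ m ∈ range N, (catalan m : ℝ) * t ^ m := sum_nonneg fun i _ => by positivity
    rw [sum_range_succ', hrec]
    simp only [catalan_zero, Nat.cast_one, pow_zero, mul_one]
    nlinarith [mul_le_mul_of_nonneg_left hsq ht0]

noncomputable def catalanSum (w : ℂ) : ℂ := ∑' m, (catalan m : ℂ) * w ^ m

section catalanSum

variable {w : ℂ}

theorem summable_norm_catalan_mul_pow (hw : ‖w‖ ≤ 1 / 4) :
    Summable fun m => ‖(catalan m : ℂ) * w ^ m‖ := by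
  simpa [norm_mul, norm_pow] using summable_of_sum_range_le (fun m => by positivity)
    (sum_range_catalan_mul_pow_le_two (norm_nonneg w) hw)

theorem norm_catalanSum_le_two (hw : ‖w‖ ≤ 1 / 4) : ‖catalanSum w‖ ≤ 2 := by
  refine (norm_tsum_le_tsum_norm (summable_norm_catalan_mul_pow hw)).trans ?_
  simpa [norm_mul, norm_pow] using Real.tsum_le_of_sum_range_le (fun m => by positivity)
    (sum_range_catalan_mul_pow_le_two (norm_nonneg w) hw)

theorem catalanSum_eq_one_add_mul_sq (hw : ‖w‖ ≤ 1 / 4) :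
    catalanSum w = 1 + w * catalanSum w ^ 2 := by
  have hs := summable_norm_catalan_mul_pow hw
  have hsq : catalanSum w ^ 2 = ∑' n, (catalan (n + 1) : ℂ) * w ^ n := by
    rw [catalanSum, sq, tsum_mul_tsum_eq_tsum_sum_antidiagonal_of_summable_norm hs hs]
    refine tsum_congr fun n => ?_
    rw [catalan_succ', Nat.cast_sum, sum_mul]
    refine sum_congr rfl fun ij hij => ?_
    rw [← mem_antidiagonal.1 hij, pow_add]
    push_cast
    ring
  rw [hsq, ← tsum_mul_left, catalanSum, hs.of_norm.tsum_eq_zero_add]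
  simp only [catalan_zero, Nat.cast_one, pow_zero, mul_one, pow_succ]
  congr 1
  exact tsum_congr fun n => by ring

theorem cpow_two_inv_one_sub_four_mul (hw : ‖w‖ < 1 / 4) :
    (1 - 4 * w) ^ (2⁻¹ : ℂ) = 1 - 2 * w * catalanSum w := by
  have hnorm : ‖2 * w * catalanSum w‖ < 1 := by
    rw [norm_mul, norm_mul, Complex.norm_two]
    nlinarith [norm_catalanSum_le_two hw.le, norm_nonneg w, norm_nonneg (catalanSum w)]
  have hre : 0 < (1 - 2 * w * catalanSum w).re := by
    rw [Complex.sub_re, Complex.one_re]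
    linarith [Complex.re_le_norm (2 * w * catalanSum w)]
  have hsq : (1 - 2 * w * catalanSum w) ^ 2 = 1 - 4 * w := by
    linear_combination (-4 * w) * catalanSum_eq_one_add_mul_sq hw.le
  rw [← hsq, Complex.sq_cpow_two_inv hre]

end catalanSum

open PowerSeries in
theorem hasSum_coeff_catalanSeriesAt_mul_pow (a : ℝ) {z : ℂ} (hz : ‖a * z ^ 2‖ ≤ 1 / 4) :
    HasSum (fun n => ((coeff n (catalanSeriesAt a) : ℝ) : ℂ) * z ^ n)
      (catalanSum (a * z ^ 2)) := by
  have hinj : Function.Injective (2 * ·) := fun m k h => by simpa using h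
  refine (hinj.hasSum_iff fun n hn => ?_).1 ?_
  · have hodd : Odd n := by
      rw [← Nat.not_even_iff_odd]
      rintro ⟨m, rfl⟩
      exact hn ⟨m, two_mul m⟩
    simp [coeff_catalanSeriesAt_of_odd a hodd]
  · refine (summable_norm_catalan_mul_pow hz).of_norm.hasSum.congr_fun fun m => ?_
    simp only [Function.comp_apply, coeff_two_mul_catalanSeriesAt]
    push_cast
    ring

theorem abs_lt_one_div_sqrt_iff {a x : ℝ} (ha : 0 < a) : |x| < 1 / √a ↔ a * x ^ 2 < 1 := by
  rw [one_div, ← Real.sqrt_inv, Real.lt_sqrt (abs_nonneg x), sq_abs, ← one_div, lt_div_iff₀ ha,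
    mul_comm]

theorem sub_div_one_add_sqrt_div {p q : ℝ} (hp : 0 < p) (hq : 0 ≤ q) :
    (p - q) / (1 + √(q / p)) = p - √(p * q) := by
  have hsp := Real.sq_sqrt hp.le
  have hsq := Real.sq_sqrt hq
  rw [Real.sqrt_div hq, Real.sqrt_mul hp.le, div_eq_iff (by positivity)]
  field_simp
  linear_combination √q * hsp + √p * hsq

/-- The paper's `b(x)` on the real line. -/
noncomputable def returnTimeGF (p q ε x : ℝ) : ℝ :=
  ε * x + (1 - ε) / (2 * q) * (1 - √(1 - 4 * p * q * x ^ 2))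

section returnTimeGF

variable {p q ε : ℝ}

theorem four_mul_mul_lt_one (hp : 1 / 2 < p) (hq : q = 1 - p) : 4 * p * q < 1 := by
  subst hq; nlinarith

theorem four_mul_mul_mul_div_sq_lt_one {u : ℝ} (hpq : 0 ≤ p * q) (hu : p * q < u ^ 2) :
    4 * p * q * (-u / (p * q + u ^ 2)) ^ 2 < 1 := by
  have hK : 0 < p * q + u ^ 2 := by linarith
  rw [div_pow, neg_sq, ← mul_div_assoc, div_lt_one (pow_pos hK 2)]
  nlinarith [sq_pos_of_pos (sub_pos.2 hu)]

theorem returnTimeGF_eq_one_iff_mul_sqrt (hq : q ≠ 0) (x : ℝ) :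
    returnTimeGF p q ε x = 1 ↔
      (1 - ε) * √(1 - 4 * p * q * x ^ 2) = (1 - ε) - 2 * q * (1 - ε * x) := by
  rw [returnTimeGF]
  generalize √(1 - 4 * p * q * x ^ 2) = s
  constructor <;> intro h
  · field_simp at h; linarith
  · field_simp; linarith

theorem returnTimeGF_eq_one_iff (hp : 1 / 2 < p) (hp1 : p < 1) (hq : q = 1 - p)
    (hε : ε < p - √(p * q)) {x : ℝ} (hx : 4 * p * q * x ^ 2 < 1) :
    returnTimeGF p q ε x = 1 ↔ x = 1 ∨ x = -(p - ε) / (p * q + (p - ε) ^ 2) := by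
  have hq0 : 0 < q := by linarith
  have hu2 : p * q < (p - ε) ^ 2 := Real.lt_sq_of_sqrt_lt (by linarith)
  have hA : 0 < 1 - ε := by linarith [Real.sqrt_nonneg (p * q)]
  have hK : 0 < p * q + (p - ε) ^ 2 := by positivity
  have hs := Real.sq_sqrt (by linarith : 0 ≤ 1 - 4 * p * q * x ^ 2)
  set s := √(1 - 4 * p * q * x ^ 2)
  set R := (1 - ε) - 2 * q * (1 - ε * x) with hR
  have hroots : (x - 1) * ((p * q + (p - ε) ^ 2) * x + (p - ε)) = 0 ↔
      x = 1 ∨ x = -(p - ε) / (p * q + (p - ε) ^ 2) := by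
    rw [mul_eq_zero, sub_eq_zero, eq_div_iff hK.ne']
    exact or_congr Iff.rfl ⟨fun h => by linarith, fun h => by linarith⟩
  have hsquare : ((1 - ε) * s) ^ 2 - R ^ 2 =
      -4 * q * ((x - 1) * ((p * q + (p - ε) ^ 2) * x + (p - ε))) := by
    subst hq
    linear_combination (1 - ε) ^ 2 * hs
  rw [returnTimeGF_eq_one_iff_mul_sqrt hq0.ne', ← hroots]
  constructor
  · intro h
    rw [h, sub_self, eq_comm, mul_eq_zero] at hsquare
    exact hsquare.resolve_left (by linarith)
  · intro h
    -- Squaring loses only the sign, and `R ≥ 0` at both roots; at the second root this is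
    -- where `(p - ε) ^ 2 > p q` is needed.
    have hR0 : 0 ≤ R := by
      rcases hroots.1 h with rfl | rfl
      · nlinarith
      · have hRK : R * (p * q + (p - ε) ^ 2) = (p - ε + q) * ((p - ε) ^ 2 - p * q) := by
          rw [hR]
          subst hq
          field_simp
          ring
        nlinarith
    rw [h, mul_zero, sub_eq_zero] at hsquare
    exact (sq_eq_sq₀ (by positivity) hR0).1 hsquare

end returnTimeGF

theorem integral_ofReal_smul_dirac_add {α E : Type*} [MeasurableSpace α]
    [MeasurableSingletonClass α] [NormedAddCommGroup E] [NormedSpace ℝ E] [CompleteSpace E]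
    (f : α → E) {a b : ℝ} (ha : 0 ≤ a) (hb : 0 ≤ b) (u v : α) :
    ∫ y, f y ∂(ENNReal.ofReal a • Measure.dirac u + ENNReal.ofReal b • Measure.dirac v) =
      a • f u + b • f v := by
  rw [integral_add_measure ((integrable_dirac enorm_lt_top).smul_measure ENNReal.ofReal_ne_top)
      ((integrable_dirac enorm_lt_top).smul_measure ENNReal.ofReal_ne_top),
    integral_smul_measure, integral_smul_measure, integral_dirac, integral_dirac,
    ENNReal.toReal_ofReal ha, ENNReal.toReal_ofReal hb]

section tauDist

variable {S : Type*} [MeasurableSpace S] (κ : Kernel S S)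

theorem tauDist_one {C : Set S} (hC : MeasurableSet C) (x : S) :
    tauDist κ C 1 x = ∫ y, C.indicator 1 y ∂(κ x) := by
  rw [integral_indicator_one hC, tauDist, Measure.real_def]

theorem tauDist_add_two (C : Set S) (n : ℕ) (x : S) :
    tauDist κ C (n + 2) x = ∫ y, Cᶜ.indicator (tauDist κ C (n + 1)) y ∂(κ x) := by
  rw [tauDist]

end tauDist

section rwKernel

open PowerSeries

variable {p q ε : ℝ}

theorem integral_rwKernel_zero (hε0 : 0 ≤ ε) (hε1 : ε ≤ 1) (f : ℕ → ℝ) :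
    ∫ y, f y ∂(rwKernel p q ε 0) = ε * f 0 + (1 - ε) * f 1 :=
  integral_ofReal_smul_dirac_add f hε0 (sub_nonneg.2 hε1) 0 1

theorem integral_rwKernel_succ (hp : 0 ≤ p) (hq : 0 ≤ q) (f : ℕ → ℝ) (i : ℕ) :
    ∫ y, f y ∂(rwKernel p q ε (i + 1)) = p * f i + q * f (i + 2) :=
  integral_ofReal_smul_dirac_add f hp hq i (i + 2)

theorem tauDist_rwKernel_succ (hp : 0 ≤ p) (hq : 0 ≤ q) (n i : ℕ) :
    tauDist (rwKernel p q ε) {0} n (i + 1) = coeff n (firstPassageSeries p q ^ (i + 1)) := by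
  induction n generalizing i with
  | zero => simp [tauDist, constantCoeff_firstPassageSeries]
  | succ n ih =>
    rw [coeff_succ_firstPassageSeries_pow_succ]
    cases n with
    | zero =>
      rw [tauDist_one _ (measurableSet_singleton 0), integral_rwKernel_succ hp hq]
      rcases i with _ | i <;> simp [constantCoeff_firstPassageSeries]
    | succ n =>
      -- For `i = 0` the step into `0` is cut off by `{0}ᶜ.indicator`, as `coeff (n + 1) 1 = 0`.
      rw [tauDist_add_two, integral_rwKernel_succ hp hq]
      rcases i with _ | i <;> simp [ih]

theorem tauDist_rwKernel_one_zero (hε0 : 0 ≤ ε) (hε1 : ε ≤ 1) :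
    tauDist (rwKernel p q ε) {0} 1 0 = ε := by
  rw [tauDist_one _ (measurableSet_singleton 0), integral_rwKernel_zero hε0 hε1]
  simp

theorem tauDist_rwKernel_add_two_zero (hp : 0 ≤ p) (hq : 0 ≤ q) (hε0 : 0 ≤ ε) (hε1 : ε ≤ 1)
    (n : ℕ) :
    tauDist (rwKernel p q ε) {0} (n + 2) 0 = (1 - ε) * p * coeff n (catalanSeriesAt (p * q)) := by
  rw [tauDist_add_two, integral_rwKernel_zero hε0 hε1]
  simp [tauDist_rwKernel_succ hp hq, firstPassageSeries, mul_assoc]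

theorem hasSum_tauDist_rwKernel_zero (hp : 0 ≤ p) (hq : 0 ≤ q) (hε0 : 0 ≤ ε) (hε1 : ε ≤ 1)
    {z : ℂ} (hz : ‖p * q * z ^ 2‖ ≤ 1 / 4) :
    HasSum (fun n => (tauDist (rwKernel p q ε) {0} n 0 : ℂ) * z ^ n)
      (ε * z + (1 - ε) * p * z ^ 2 * catalanSum (p * q * z ^ 2)) := by
  have htail := (hasSum_coeff_catalanSeriesAt_mul_pow (p * q) (by exact_mod_cast hz)).mul_left
    ((1 - ε) * p * z ^ 2)
  have hhead : ∑ i ∈ range 2, (tauDist (rwKernel p q ε) {0} i 0 : ℂ) * z ^ i = ε * z := by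
    simp [sum_range_succ, tauDist_rwKernel_one_zero hε0 hε1, tauDist.eq_1]
  rw [← hasSum_nat_add_iff' 2, hhead, add_sub_cancel_left]
  push_cast at htail
  refine htail.congr_fun fun n => ?_
  rw [tauDist_rwKernel_add_two_zero hp hq hε0 hε1]
  push_cast
  ring

theorem tsum_tauDist_rwKernel_zero (hp : 0 < p) (hq : 0 < q) (hε0 : 0 ≤ ε) (hε1 : ε ≤ 1)
    {z : ℂ} (hz : ‖z‖ < 1 / √(4 * p * q)) :
    ∑' n : ℕ, ((tauDist (rwKernel p q ε) {0} n 0 : ℝ) : ℂ) * z ^ n =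
      (ε : ℂ) * z + (((1 - ε) / (2 * q) : ℝ) : ℂ) *
        (1 - (1 - 4 * (p : ℂ) * (q : ℂ) * z ^ 2) ^ ((1 : ℂ) / 2)) := by
  have hz' : 4 * p * q * ‖z‖ ^ 2 < 1 :=
    (abs_lt_one_div_sqrt_iff (by positivity)).1 (by rwa [abs_norm])
  have hw : ‖(p : ℂ) * q * z ^ 2‖ < 1 / 4 := by
    simp only [norm_mul, norm_pow, Complex.norm_real, Real.norm_of_nonneg hp.le,
      Real.norm_of_nonneg hq.le]
    linarith
  rw [(hasSum_tauDist_rwKernel_zero hp.le hq.le hε0 hε1 hw.le).tsum_eq, one_div 2,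
    show 1 - 4 * (p : ℂ) * q * z ^ 2 = 1 - 4 * (p * q * z ^ 2) by ring,
    cpow_two_inv_one_sub_four_mul hw]
  have hq' : (q : ℂ) ≠ 0 := Complex.ofReal_ne_zero.2 hq.ne'
  push_cast
  field_simp
  ring

theorem tsum_tauDist_rwKernel_zero_real (hp : 0 < p) (hq : 0 < q) (hε0 : 0 ≤ ε) (hε1 : ε ≤ 1)
    {x : ℝ} (hx : 4 * p * q * x ^ 2 < 1) :
    ∑' n : ℕ, tauDist (rwKernel p q ε) {0} n 0 * x ^ n = returnTimeGF p q ε x := by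
  have h := tsum_tauDist_rwKernel_zero hp hq hε0 hε1 (z := x)
    (by rwa [Complex.norm_real, Real.norm_eq_abs, abs_lt_one_div_sqrt_iff (by positivity)])
  have hsqrt : (1 - 4 * (p : ℂ) * q * (x : ℂ) ^ 2) ^ ((1 : ℂ) / 2) =
      ((√(1 - 4 * p * q * x ^ 2) : ℝ) : ℂ) := by
    rw [Real.sqrt_eq_rpow, Complex.ofReal_cpow (by linarith)]
    push_cast
    ring_nf
  rw [hsqrt] at h
  apply Complex.ofReal_injective
  rw [returnTimeGF, Complex.ofReal_tsum]
  push_cast at h ⊢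
  exact h

end rwKernel

theorem stmt19 (p q ε : ℝ) (hp : 1 / 2 < p) (hp1 : p < 1) (hq : q = 1 - p)
    (hε0 : 0 ≤ ε) (hε1 : ε ≤ 1) :
    (∀ z : ℂ, ‖z‖ < 1 / Real.sqrt (4 * p * q) →
      ∑' n : ℕ, ((tauDist (rwKernel p q ε) {0} n 0 : ℝ) : ℂ) * z ^ n =
        (ε : ℂ) * z + (((1 - ε) / (2 * q) : ℝ) : ℂ) *
          (1 - (1 - 4 * (p : ℂ) * (q : ℂ) * z ^ 2) ^ ((1 : ℂ) / 2))) ∧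
    (ε < (p - q) / (1 + Real.sqrt (q / p)) →
      {x : ℝ | x ∈ Set.Ioo (-(1 / Real.sqrt (4 * p * q))) (1 / Real.sqrt (4 * p * q)) ∧
          ∑' n : ℕ, tauDist (rwKernel p q ε) {0} n 0 * x ^ n = 1} =
        {1, -(p - ε) / (p * q + (p - ε) ^ 2)}) := by
  have hp0 : 0 < p := by linarith
  have hq0 : 0 < q := by linarith
  refine ⟨fun z hz => tsum_tauDist_rwKernel_zero hp0 hq0 hε0 hε1 hz, fun hε => ?_⟩
  rw [sub_div_one_add_sqrt_div hp0 hq0.le] at hε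
  have hpq : 0 < 4 * p * q := by positivity
  have hb : ∀ x, 4 * p * q * x ^ 2 < 1 → (∑' n : ℕ, tauDist (rwKernel p q ε) {0} n 0 * x ^ n = 1 ↔
      x = 1 ∨ x = -(p - ε) / (p * q + (p - ε) ^ 2)) := fun x hx => by
    rw [tsum_tauDist_rwKernel_zero_real hp0 hq0 hε0 hε1 hx, returnTimeGF_eq_one_iff hp hp1 hq hε hx]
  ext x
  simp only [Set.mem_ofPred_eq, Set.mem_Ioo, ← abs_lt, abs_lt_one_div_sqrt_iff hpq,
    Set.mem_insert_iff, Set.mem_singleton_iff]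
  refine ⟨fun ⟨hx, h⟩ => (hb x hx).1 h, fun h => ?_⟩
  have hx : 4 * p * q * x ^ 2 < 1 := by
    rcases h with rfl | rfl
    · simpa using four_mul_mul_lt_one hp hq
    · exact four_mul_mul_mul_div_sq_lt_one (by positivity)
        (Real.lt_sq_of_sqrt_lt (by linarith))
  exact ⟨hx, (hb x hx).2 h⟩
end
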